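/- arXiv:2604.05294 — 11 statements merged into one kernel-verified Lean document; each statement's English description precedes it below -/
import Mathlib

section
/- Let (X,d) be a compact metric space and L > 0. For each N ∈ ℕ let V_N be a finite set, ι_N : V_N → X and i_N : X → V_N maps satisfying d(ι_N(i_N(x)), x) ≤ δ_N for all x ∈ X, where δ_N → 0 as N → ∞. Let σ_{N,1}, …, σ_{N,K} : V_N → V_N be maps satisfying the uniform Lipschitz condition d(ι_N(σ_{N,k}(u)), ι_N(σ_{N,k}(v))) ≤ L·d(ι_N(u), ι_N(v)) for all N, all k ∈ {1,…,K}, and all u, v ∈ V_N. Then there exist a strictly increasing sequence of indices (N_j) and maps τ_1, …, τ_K : X → X, each Lipschitz with constant L, such that for every k, sup_{x ∈ X} d(ι_{N_j}(σ_{N_j,k}(i_{N_j}(x))), τ_k(x)) → 0 as j → ∞. -/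
/-!
Put `F_N y := (ι_N (σ_{N,k} (i_N y)))_k ∈ X^K`. Because `i_N` moves points by at most `δ_N`,
`F_N` is `L`-Lipschitz up to an additive error `2 L δ_N → 0`. By sequential compactness of a
countable power of `X^K`, a subsequence converges on a countable dense set; as the additive error
vanishes, it is then uniformly Cauchy on all of `X`, and its uniform limit is `L`-Lipschitz. The
components of the limit are the maps `τ_k`.
-/

open Filter Topology Metric NNReal

theorem TendstoUniformly.tendsto_iSup_dist {ι α β : Type*} [PseudoMetricSpace β] {l : Filter ι}
    {F : ι → α → β} {f : α → β} (h : TendstoUniformly F f l) :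
    Tendsto (fun n => ⨆ x, dist (F n x) (f x)) l (𝓝 0) := by
  refine Metric.tendsto_nhds.2 fun ε hε => ?_
  filter_upwards [Metric.tendstoUniformly_iff.1 h (ε / 2) (half_pos hε)] with n hn
  have hsup : ⨆ x, dist (F n x) (f x) ≤ ε / 2 :=
    Real.iSup_le (fun x => by rw [dist_comm]; exact (hn x).le) (half_pos hε).le
  rw [Real.dist_eq, sub_zero, abs_of_nonneg (Real.iSup_nonneg fun _ => dist_nonneg)]
  linarith

theorem DenseRange.exists_finset_dist_lt {ι X : Type*} [PseudoMetricSpace X] [CompactSpace X]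
    {x : ι → X} (hx : DenseRange x) {r : ℝ} (hr : 0 < r) :
    ∃ t : Finset ι, ∀ y, ∃ i ∈ t, dist y (x i) < r := by
  obtain ⟨t, ht⟩ := isCompact_univ.elim_finite_subcover (fun i => ball (x i) r)
    (fun _ => isOpen_ball) fun y _ => Set.mem_iUnion.2 (Metric.denseRange_iff.1 hx y r hr)
  exact ⟨t, fun y => by simpa using ht (Set.mem_univ y)⟩

theorem exists_strictMono_forall_tendsto {ι Y : Type*} [Countable ι] [TopologicalSpace Y]
    [TopologicalSpace.PseudoMetrizableSpace Y] [CompactSpace Y] (f : ℕ → ι → Y) :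
    ∃ φ : ℕ → ℕ, StrictMono φ ∧
      ∃ p : ι → Y, ∀ i, Tendsto (fun j => f (φ j) i) atTop (𝓝 (p i)) :=
  let ⟨p, φ, hφ, hp⟩ := CompactSpace.tendsto_subseq f
  ⟨φ, hφ, p, tendsto_pi_nhds.1 hp⟩

section ApproxLipschitz

variable {X Y : Type*} [PseudoMetricSpace X] [PseudoMetricSpace Y] {L : ℝ≥0}
  {f : ℕ → X → Y} {ε : ℕ → ℝ}

theorem LipschitzWith.of_tendsto_of_dist_le_add {g : X → Y} (hε : Tendsto ε atTop (𝓝 0))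
    (hf : ∀ n x y, dist (f n x) (f n y) ≤ L * dist x y + ε n)
    (hg : ∀ x, Tendsto (fun n => f n x) atTop (𝓝 (g x))) : LipschitzWith L g :=
  LipschitzWith.of_dist_le_mul fun x y =>
    le_of_tendsto_of_tendsto' ((hg x).dist (hg y))
      (by simpa using tendsto_const_nhds.add hε) (hf · x y)

theorem uniformCauchySeqOn_of_dist_le_add [CompactSpace X] {ι : Type*} {x : ι → X}
    (hx : DenseRange x) (hε : Tendsto ε atTop (𝓝 0))
    (hf : ∀ n x y, dist (f n x) (f n y) ≤ L * dist x y + ε n)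
    (hc : ∀ i, CauchySeq fun n => f n (x i)) : UniformCauchySeqOn f atTop Set.univ := by
  refine Metric.uniformCauchySeqOn_iff.2 fun e he => ?_
  obtain ⟨r, hr, hLr⟩ := exists_pos_mul_lt (div_pos he (by norm_num : (0 : ℝ) < 5)) (L : ℝ)
  obtain ⟨t, ht⟩ := hx.exists_finset_dist_lt hr
  have hnet : ∀ᶠ n in atTop, ∀ i ∈ t, ∀ m ≥ n, ∀ m' ≥ n,
      dist (f m (x i)) (f m' (x i)) < e / 5 := by
    rw [t.eventually_all]
    intro i _
    obtain ⟨N, hN⟩ := Metric.cauchySeq_iff.1 (hc i) (e / 5) (by positivity)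
    filter_upwards [eventually_ge_atTop N] with n hn m hm m' hm'
      using hN m (hn.trans hm) m' (hn.trans hm')
  have hsmall : ∀ᶠ n in atTop, ∀ m ≥ n, ε m < e / 5 := by
    obtain ⟨N, hN⟩ := eventually_atTop.1 (hε.eventually_lt_const (by positivity : 0 < e / 5))
    filter_upwards [eventually_ge_atTop N] with n hn m hm using hN m (hn.trans hm)
  obtain ⟨N, hN⟩ := eventually_atTop.1 (hnet.and hsmall)
  refine ⟨N, fun m hm m' hm' y _ => ?_⟩
  obtain ⟨hnetN, hsmallN⟩ := hN N le_rfl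
  obtain ⟨i, hi, hyi⟩ := ht y
  have hd : (L : ℝ) * dist y (x i) ≤ L * r := by gcongr
  calc dist (f m y) (f m' y)
      ≤ dist (f m y) (f m (x i)) + dist (f m (x i)) (f m' (x i)) + dist (f m' (x i)) (f m' y) :=
        dist_triangle4 _ _ _ _
    _ ≤ (L * dist y (x i) + ε m) + dist (f m (x i)) (f m' (x i))
          + (L * dist y (x i) + ε m') := by
        gcongr
        · exact hf m y (x i)
        · rw [dist_comm y]; exact hf m' (x i) y
    _ < e := by linarith [hnetN i hi m hm m' hm', hsmallN m hm, hsmallN m' hm']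

theorem exists_strictMono_tendstoUniformly_lipschitzWith [CompactSpace X] [CompactSpace Y]
    (hε : Tendsto ε atTop (𝓝 0))
    (hf : ∀ n x y, dist (f n x) (f n y) ≤ L * dist x y + ε n) :
    ∃ φ : ℕ → ℕ, StrictMono φ ∧ ∃ g : X → Y,
      LipschitzWith L g ∧ TendstoUniformly (fun j => f (φ j)) g atTop := by
  obtain ⟨s, hs, hsd⟩ := TopologicalSpace.exists_countable_dense X
  have := hs.to_subtype
  obtain ⟨φ, hφ, p, hp⟩ := exists_strictMono_forall_tendsto fun n (x : s) => f n x
  have hεφ : Tendsto (ε ∘ φ) atTop (𝓝 0) := hε.comp hφ.tendsto_atTop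
  have hfφ : ∀ n x y, dist (f (φ n) x) (f (φ n) y) ≤ L * dist x y + (ε ∘ φ) n :=
    fun n => hf (φ n)
  have hcauchy : UniformCauchySeqOn (fun j => f (φ j)) atTop Set.univ :=
    uniformCauchySeqOn_of_dist_le_add hsd.denseRange_val hεφ hfφ fun x => (hp x).cauchySeq
  choose g hg using fun y =>
    cauchySeq_tendsto_of_complete (hcauchy.cauchySeq (Set.mem_univ y))
  refine ⟨φ, hφ, g, LipschitzWith.of_tendsto_of_dist_le_add hεφ hfφ hg, ?_⟩
  exact tendstoUniformlyOn_univ.1 (hcauchy.tendstoUniformlyOn_of_tendsto fun y _ => hg y)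

end ApproxLipschitz

theorem dist_comp_index_le {X V : Type*} [PseudoMetricSpace X] {ι : V → X} {idx : X → V}
    {s : V → V} {L δ : ℝ} (hδ : ∀ x, dist (ι (idx x)) x ≤ δ)
    (hs : ∀ u v, dist (ι (s u)) (ι (s v)) ≤ L * dist (ι u) (ι v)) (y z : X) :
    dist (ι (s (idx y))) (ι (s (idx z))) ≤ L.toNNReal * dist y z + 2 * L.toNNReal * δ := by
  have hidx : dist (ι (idx y)) (ι (idx z)) ≤ dist y z + 2 * δ := by
    linarith [hδ y, hδ z, dist_triangle4 (ι (idx y)) y z (ι (idx z)), dist_comm z (ι (idx z))]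
  calc dist (ι (s (idx y))) (ι (s (idx z)))
      ≤ L * dist (ι (idx y)) (ι (idx z)) := hs _ _
    _ ≤ L.toNNReal * dist (ι (idx y)) (ι (idx z)) := by
        gcongr; exact Real.le_coe_toNNReal L
    _ ≤ L.toNNReal * (dist y z + 2 * δ) := by gcongr
    _ = L.toNNReal * dist y z + 2 * L.toNNReal * δ := by ring

theorem stmt_0_general {X : Type*} [MetricSpace X] [CompactSpace X]
    (L : ℝ) (K : ℕ)
    (V : ℕ → Type*)
    (ι : ∀ N, V N → X) (idx : ∀ N, X → V N)
    (δ : ℕ → ℝ)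
    (hδ : ∀ N (x : X), dist (ι N (idx N x)) x ≤ δ N)
    (hδ0 : Tendsto δ atTop (nhds 0))
    (σ : ∀ N, Fin K → V N → V N)
    (hLip : ∀ N (k : Fin K) (u v : V N),
      dist (ι N (σ N k u)) (ι N (σ N k v)) ≤ L * dist (ι N u) (ι N v)) :
    ∃ (Nj : ℕ → ℕ), StrictMono Nj ∧ ∃ τ : Fin K → X → X,
      (∀ k, LipschitzWith (Real.toNNReal L) (τ k)) ∧
      ∀ k, Tendsto
        (fun j => ⨆ x : X, dist (ι (Nj j) (σ (Nj j) k (idx (Nj j) x))) (τ k x))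
        atTop (nhds 0) := by
  let F : ℕ → X → Fin K → X := fun N y k => ι N (σ N k (idx N y))
  have hF : ∀ N y z, dist (F N y) (F N z) ≤ L.toNNReal * dist y z + 2 * L.toNNReal * δ N := by
    intro N y z
    have hδN : 0 ≤ δ N := dist_nonneg.trans (hδ N y)
    exact (dist_pi_le_iff (by positivity)).2 fun k => dist_comp_index_le (hδ N) (hLip N k) y z
  obtain ⟨φ, hφ, g, hg, hconv⟩ :=
    exists_strictMono_tendstoUniformly_lipschitzWith (by simpa using hδ0.const_mul _) hF
  refine ⟨φ, hφ, fun k y => g y k, fun k =>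
    LipschitzWith.of_dist_le_mul fun y z => (dist_le_pi_dist _ _ k).trans (hg.dist_le_mul y z),
    fun k => ?_⟩
  exact ((LipschitzWith.eval k).uniformContinuous.comp_tendstoUniformly hconv).tendsto_iSup_dist

/-- continuum limit of discrete generators (Lemma on existence of
bi-Lipschitz limit maps along a subsequence, via Arzelà–Ascoli / diagonal argument). -/
theorem stmt_0 {X : Type*} [MetricSpace X] [CompactSpace X]
    (L : ℝ) (hL : 0 < L) (K : ℕ)
    (V : ℕ → Type*) [∀ N, Fintype (V N)]
    (ι : ∀ N, V N → X) (idx : ∀ N, X → V N)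
    (δ : ℕ → ℝ)
    (hδ : ∀ N (x : X), dist (ι N (idx N x)) x ≤ δ N)
    (hδ0 : Tendsto δ atTop (nhds 0))
    (σ : ∀ N, Fin K → V N → V N)
    (hLip : ∀ N (k : Fin K) (u v : V N),
      dist (ι N (σ N k u)) (ι N (σ N k v)) ≤ L * dist (ι N u) (ι N v)) :
    ∃ (Nj : ℕ → ℕ), StrictMono Nj ∧ ∃ τ : Fin K → X → X,
      (∀ k, LipschitzWith (Real.toNNReal L) (τ k)) ∧
      ∀ k, Tendsto
        (fun j => ⨆ x : X, dist (ι (Nj j) (σ (Nj j) k (idx (Nj j) x))) (τ k x))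
        atTop (nhds 0) :=
  stmt_0_general L K V ι idx δ hδ hδ0 σ hLip
end

section
/- Let (X, ν) be a probability space and let σ_1, …, σ_K : X → X be measurable bijections with measurable inverses, each preserving ν. Assume the joint action is ergodic: every measurable set E with ν(σ_k^{-1}(E) Δ E) = 0 for all k ∈ {1,…,K} satisfies ν(E) = 0 or ν(E) = 1. Define G on L²(X, ν) by (Gf)(x) = (1/K) ∑_{k=1}^K f(σ_k(x)). Then every f ∈ L²(X, ν) with Gf = f ν-almost everywhere is constant ν-almost everywhere; in particular, the eigenspace of G for the eigenvalue 1 is the one-dimensional span of the constant function 1. -/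
/-!
Since each `σ k` preserves `ν`, the functions `f ∘ σ k` have the same `L²` norm as `f`, and `f` is
their average. In a Hilbert space a vector that is the average of vectors of no larger norm equals
each of them, so `f ∘ σ k = f` a.e. for every `k`. The level sets of a measurable version of `f`
are then invariant under the joint action, hence null or conull by ergodicity, which forces `f` to
be a.e. constant.
-/

open MeasureTheory

theorem eq_of_sum_eq_card_smul_of_norm_le {E ι : Type*} [NormedAddCommGroup E]
    [InnerProductSpace ℝ E] [Fintype ι] {v : ι → E} {x : E}
    (hsum : ∑ i, v i = (Fintype.card ι : ℝ) • x) (hnorm : ∀ i, ‖v i‖ ≤ ‖x‖) (i : ι) :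
    v i = x := by
  have hdist : ∑ j, ‖v j - x‖ ^ 2 ≤ 0 := calc
    ∑ j, ‖v j - x‖ ^ 2 ≤ ∑ j, 2 * (‖x‖ ^ 2 - inner ℝ (v j) x) := by
      gcongr with j
      rw [norm_sub_sq_real]
      nlinarith [hnorm j, norm_nonneg (v j)]
    _ = 2 * (Fintype.card ι * ‖x‖ ^ 2 - inner ℝ (∑ j, v j) x) := by
      simp [← Finset.mul_sum, Finset.sum_sub_distrib, sum_inner]
    _ = 0 := by
      rw [hsum, real_inner_smul_left, real_inner_self_eq_norm_sq, sub_self, mul_zero]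
  have := (Finset.sum_eq_zero_iff_of_nonneg fun j _ => sq_nonneg ‖v j - x‖).1
    (hdist.antisymm (by positivity)) i (Finset.mem_univ i)
  simpa [sub_eq_zero] using this

theorem MeasureTheory.MemLp.ae_eq_comp_of_sum_comp_eq {X ι : Type*} [MeasurableSpace X]
    {ν : Measure X} [Fintype ι] {σ : ι → X → X} (hσ : ∀ i, MeasurePreserving (σ i) ν ν)
    {f : X → ℝ} (hf : MemLp f 2 ν)
    (hfix : ∀ᵐ x ∂ν, ∑ i, f (σ i x) = Fintype.card ι * f x) (i : ι) :
    f ∘ σ i =ᵐ[ν] f := by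
  have hfσ : ∀ i, MemLp (f ∘ σ i) 2 ν := fun i => hf.comp_measurePreserving (hσ i)
  have hsum : ∑ i, (hfσ i).toLp = (Fintype.card ι : ℝ) • hf.toLp f := by
    refine Lp.ext ?_
    filter_upwards [Lp.coeFn_fun_finsetSum Finset.univ fun i => (hfσ i).toLp, Lp.coeFn_smul
      (Fintype.card ι : ℝ) (hf.toLp f), hf.coeFn_toLp, ae_all_iff.2 fun i => (hfσ i).coeFn_toLp,
      hfix] with x hx hsmul hF hV hfixx
    simp_all
  have hnorm : ∀ i, ‖(hfσ i).toLp‖ ≤ ‖hf.toLp f‖ := fun i => by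
    rw [Lp.norm_toLp, Lp.norm_toLp, eLpNorm_comp_measurePreserving hf.1 (hσ i)]
  exact ((hfσ i).toLp_eq_toLp_iff hf).1 (eq_of_sum_eq_card_smul_of_norm_le hsum hnorm i)

def JointlyErgodic {X ι : Type*} [MeasurableSpace X] (σ : ι → X → X) (ν : Measure X) : Prop :=
  ∀ E : Set X, MeasurableSet E → (∀ i, ν (symmDiff (σ i ⁻¹' E) E) = 0) → ν E = 0 ∨ ν E = 1

theorem JointlyErgodic.ae_eq_const_of_ae_eq_comp {X ι Y : Type*} [MeasurableSpace X]
    {ν : Measure X} [IsProbabilityMeasure ν] {σ : ι → X → X} (h : JointlyErgodic σ ν)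
    [MeasurableSpace Y] [Nonempty Y] [MeasurableSpace.CountablySeparated Y]
    {g : X → Y} (hg : Measurable g) (hinv : ∀ i, g ∘ σ i =ᵐ[ν] g) :
    ∃ c, g =ᵐ[ν] Function.const X c := by
  refine Filter.exists_eventuallyEq_const_of_forall_separating MeasurableSet fun U hU => ?_
  have hE : ∀ i, ν (symmDiff (σ i ⁻¹' (g ⁻¹' U)) (g ⁻¹' U)) = 0 := fun i =>
    measure_symmDiff_eq_zero_iff.2 ((hinv i).mono fun x hx => by simp [← hx]).set_eq
  rcases h _ (hg hU) hE with h0 | h1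
  · exact Or.inr (measure_eq_zero_iff_ae_notMem.1 h0)
  · refine Or.inl ((ae_iff_measure_eq (hg hU).nullMeasurableSet).2 ?_)
    rwa [measure_univ]

theorem stmt_3_general {X : Type*} [MeasurableSpace X]
    (ν : Measure X) [IsProbabilityMeasure ν]
    (K : ℕ)
    (σ : Fin K → X → X)
    (hpres : ∀ k, MeasurePreserving (σ k) ν ν)
    (herg : ∀ E : Set X, MeasurableSet E →
      (∀ k, ν (symmDiff (σ k ⁻¹' E) E) = 0) → ν E = 0 ∨ ν E = 1)
    (f : X → ℝ) (hf : MemLp f 2 ν)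
    (hfix : ∀ᵐ x ∂ν, (1 / (K : ℝ)) * ∑ k : Fin K, f (σ k x) = f x) :
    ∃ cst : ℝ, ∀ᵐ x ∂ν, f x = cst := by
  have hsum : ∀ᵐ x ∂ν, ∑ k, f (σ k x) = Fintype.card (Fin K) * f x := by
    filter_upwards [hfix] with x hx
    rcases eq_or_ne K 0 with rfl | hK
    · simp
    · rw [← hx, Fintype.card_fin]
      field_simp
  have hinv := hf.ae_eq_comp_of_sum_comp_eq hpres hsum
  obtain ⟨g, hg, hfg⟩ := hf.1.aemeasurable
  have hginv : ∀ k, g ∘ σ k =ᵐ[ν] g := fun k =>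
    ((hpres k).quasiMeasurePreserving.ae_eq_comp hfg).symm.trans ((hinv k).trans hfg)
  obtain ⟨c, hc⟩ := JointlyErgodic.ae_eq_const_of_ae_eq_comp herg hg hginv
  exact ⟨c, hfg.trans hc⟩

/-- under ergodicity of the joint action, any L² fixed point of the
graphexon averaging operator is constant ν-almost everywhere (the eigenvalue 1 is
simple with eigenspace spanned by the constants). -/
theorem stmt_3 {X : Type*} [MeasurableSpace X] [Nonempty X]
    (ν : Measure X) [IsProbabilityMeasure ν]
    (K : ℕ) (hK : 0 < K)
    (σ : Fin K → X → X)
    (hmeas : ∀ k, Measurable (σ k))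
    (hbij : ∀ k, Function.Bijective (σ k))
    (hinvmeas : ∀ k, Measurable (Function.invFun (σ k)))
    (hpres : ∀ k, MeasurePreserving (σ k) ν ν)
    (herg : ∀ E : Set X, MeasurableSet E →
      (∀ k, ν (symmDiff (σ k ⁻¹' E) E) = 0) → ν E = 0 ∨ ν E = 1)
    (f : X → ℝ) (hf : MemLp f 2 ν)
    (hfix : ∀ᵐ x ∂ν, (1 / (K : ℝ)) * ∑ k : Fin K, f (σ k x) = f x) :
    ∃ cst : ℝ, ∀ᵐ x ∂ν, f x = cst :=
  stmt_3_general ν K σ hpres herg f hf hfix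
end

section
/- Let (X,d) be a compact metric space with Borel probability measure ν. Let V be a finite set of cardinality M, {Q_v}_{v ∈ V} a measurable partition of X with ν(Q_v) = 1/M for every v, each Q_v of diameter at most δ, points ι(v) ∈ Q_v, and i : X → V the map with x ∈ Q_{i(x)}. Let σ_1, …, σ_K : V → V and τ_1, …, τ_K : X → X with each τ_k Lipschitz with constant L_τ, and suppose d(τ_k(ι(v)), ι(σ_k(v))) ≤ ε for all v ∈ V and all k. Define the step-graphexon operator (G_N f)(x) = (1/K) ∑_{k=1}^K M ∫_{Q_{σ_k(i(x))}} f dν and the limit operator (G f)(x) = (1/K) ∑_{k=1}^K f(τ_k(x)). Then for every Lipschitz function f : X → ℝ with Lipschitz constant L_f, ‖G_N f − G f‖_{L²(X,ν)} ≤ L_f·((1 + L_τ)·δ + ε). -/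
/-!
The bound holds pointwise. For `x ∈ Q v` and `y ∈ Q (σ k v)` the chain
`y ~ ι (σ k v) ~ τ k (ι v) ~ τ k x` gives `d(y, τ k x) ≤ δ + ε + Lτ δ`, so `f y` lies within
`Lf ((1 + Lτ) δ + ε)` of `f (τ k x)`. Since every cell has measure `1 / M`, the term
`M ∫_{Q (σ k v)} f` is the average of `f` over that cell, which therefore lies in the same closed
ball. Averaging over `k` keeps the
bound, and the L² norm for a probability measure is at most the sup norm.
-/

open MeasureTheory

theorem dist_le_of_lipschitz_of_near {X : Type*} [PseudoMetricSpace X] {τ : X → X} {L : NNReal}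
    (hτ : LipschitzWith L τ) {x y z a : X} {δ ε : ℝ} (hyz : dist y z ≤ δ)
    (haz : dist (τ a) z ≤ ε) (hax : dist a x ≤ δ) :
    dist y (τ x) ≤ (1 + L) * δ + ε := by
  have hτax : dist (τ a) (τ x) ≤ L * δ :=
    (hτ.dist_le_mul a x).trans (mul_le_mul_of_nonneg_left hax L.coe_nonneg)
  calc dist y (τ x) ≤ dist y z + dist z (τ a) + dist (τ a) (τ x) := dist_triangle4 _ _ _ _
    _ ≤ δ + ε + L * δ := by rw [dist_comm z]; linarith
    _ = (1 + L) * δ + ε := by ring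

theorem abs_average_sub_average_le {ι : Type*} {s : Finset ι} (hs : s.Nonempty)
    {a b : ι → ℝ} {C : ℝ} (h : ∀ i ∈ s, |a i - b i| ≤ C) :
    |(1 / (s.card : ℝ)) * ∑ i ∈ s, a i - (1 / (s.card : ℝ)) * ∑ i ∈ s, b i| ≤ C := by
  have hcard : (0 : ℝ) < s.card := Nat.cast_pos.mpr hs.card_pos
  rw [← mul_sub, ← Finset.sum_sub_distrib, abs_mul, abs_of_pos (by positivity)]
  calc 1 / (s.card : ℝ) * |∑ i ∈ s, (a i - b i)|
      ≤ 1 / (s.card : ℝ) * ∑ _i ∈ s, C := by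
        gcongr
        exact (Finset.abs_sum_le_sum_abs _ _).trans (Finset.sum_le_sum h)
    _ = C := by rw [Finset.sum_const, nsmul_eq_mul]; field_simp

theorem dist_setAverage_le_of_forall_mem {α E : Type*} [MeasurableSpace α] {μ : Measure α}
    [NormedAddCommGroup E] [NormedSpace ℝ E] [CompleteSpace E] {f : α → E} {t : Set α}
    (ht : MeasurableSet t) (h0 : μ t ≠ 0) (htop : μ t ≠ ⊤) (hfi : IntegrableOn f t μ)
    {c : E} {C : ℝ} (h : ∀ y ∈ t, dist (f y) c ≤ C) :
    dist (⨍ y in t, f y ∂μ) c ≤ C :=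
  Metric.mem_closedBall.mp <| (convex_closedBall c C).set_average_mem Metric.isClosed_closedBall
    h0 htop ((ae_restrict_iff' ht).mpr (ae_of_all _ h)) hfi

theorem natCast_mul_setIntegral_eq_setAverage {α : Type*} [MeasurableSpace α] {μ : Measure α}
    {s : Set α} {M : ℕ} (hs : μ s = 1 / (M : ENNReal)) (f : α → ℝ) :
    (M : ℝ) * ∫ y in s, f y ∂μ = ⨍ y in s, f y ∂μ := by
  rw [setAverage_eq, measureReal_def, hs, smul_eq_mul]
  simp

theorem sqrt_integral_sq_le_of_abs_le {α : Type*} [MeasurableSpace α] {μ : Measure α}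
    [IsProbabilityMeasure μ] {g : α → ℝ} {C : ℝ} (h : ∀ᵐ x ∂μ, |g x| ≤ C) :
    Real.sqrt (∫ x, g x ^ 2 ∂μ) ≤ C := by
  obtain ⟨x, hx⟩ := h.exists
  have hC : 0 ≤ C := (abs_nonneg _).trans hx
  have hsq : ∀ᵐ x ∂μ, g x ^ 2 ≤ C ^ 2 := h.mono fun x hx => by rw [← sq_abs]; gcongr
  rw [Real.sqrt_le_left hC]
  calc ∫ x, g x ^ 2 ∂μ ≤ ∫ _x, C ^ 2 ∂μ :=
        integral_mono_of_nonneg (ae_of_all _ fun x => sq_nonneg _) (integrable_const _) hsq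
    _ = C ^ 2 := by simp

theorem stmt_4_general {X : Type*} [MetricSpace X] [CompactSpace X]
    [MeasurableSpace X] [BorelSpace X]
    (ν : Measure X) [IsProbabilityMeasure ν]
    {V : Type*} (M : ℕ)
    (K : ℕ) (hK : 0 < K)
    (Q : V → Set X)
    (hQmeas : ∀ v, MeasurableSet (Q v))
    (hQmeasure : ∀ v, ν (Q v) = 1 / (M : ENNReal))
    (ι : V → X) (hι : ∀ v, ι v ∈ Q v)
    (idx : X → V) (hidx : ∀ x, x ∈ Q (idx x))
    (δ : ℝ) (hδ : ∀ v, ∀ x ∈ Q v, ∀ y ∈ Q v, dist x y ≤ δ)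
    (σ : Fin K → V → V)
    (τ : Fin K → X → X) (Lτ : NNReal) (hτ : ∀ k, LipschitzWith Lτ (τ k))
    (ε : ℝ) (hε : ∀ (v : V) (k : Fin K), dist (τ k (ι v)) (ι (σ k v)) ≤ ε)
    (f : X → ℝ) (Lf : NNReal) (hf : LipschitzWith Lf f) :
    Real.sqrt (∫ x,
        ((1 / (K : ℝ)) * ∑ k : Fin K, (M : ℝ) * ∫ y in Q (σ k (idx x)), f y ∂ν
          - (1 / (K : ℝ)) * ∑ k : Fin K, f (τ k x)) ^ 2 ∂ν)
      ≤ (Lf : ℝ) * ((1 + (Lτ : ℝ)) * δ + ε) := by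
  have hfi : Integrable f ν := hf.continuous.integrable_of_hasCompactSupport
    (HasCompactSupport.of_compactSpace f)
  have hcell : ∀ v, ν (Q v) ≠ 0 := fun v => by simp [hQmeasure]
  have hterm : ∀ x k, |(M : ℝ) * ∫ y in Q (σ k (idx x)), f y ∂ν - f (τ k x)|
      ≤ Lf * ((1 + Lτ) * δ + ε) := fun x k => by
    rw [natCast_mul_setIntegral_eq_setAverage (hQmeasure _), ← Real.dist_eq]
    refine dist_setAverage_le_of_forall_mem (hQmeas _) (hcell _) (measure_ne_top _ _)
      hfi.integrableOn fun y hy => ?_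
    refine (hf.dist_le_mul _ _).trans (mul_le_mul_of_nonneg_left ?_ Lf.coe_nonneg)
    exact dist_le_of_lipschitz_of_near (hτ k) (hδ _ y hy _ (hι _)) (hε _ k)
      (hδ _ _ (hι _) x (hidx x))
  refine sqrt_integral_sq_le_of_abs_le (ae_of_all _ fun x => ?_)
  have := abs_average_sub_average_le (Finset.univ_nonempty_iff.mpr ⟨⟨0, hK⟩⟩)
    fun k (_ : k ∈ Finset.univ) => hterm x k
  simpa only [Finset.card_univ, Fintype.card_fin] using this

/-- quantitative L² bound between the step-graphexon operator and the
limit graphexon operator on Lipschitz functions. -/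
theorem stmt_4 {X : Type*} [MetricSpace X] [CompactSpace X]
    [MeasurableSpace X] [BorelSpace X]
    (ν : Measure X) [IsProbabilityMeasure ν]
    {V : Type*} [Fintype V] (M : ℕ) (hM : Fintype.card V = M)
    (K : ℕ) (hK : 0 < K)
    (Q : V → Set X)
    (hQmeas : ∀ v, MeasurableSet (Q v))
    (hQmeasure : ∀ v, ν (Q v) = 1 / (M : ENNReal))
    (hQdisj : Pairwise fun (u v : V) => Disjoint (Q u) (Q v))
    (hQcover : (⋃ v : V, Q v) = Set.univ)
    (ι : V → X) (hι : ∀ v, ι v ∈ Q v)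
    (idx : X → V) (hidx : ∀ x, x ∈ Q (idx x))
    (δ : ℝ) (hδ : ∀ v, ∀ x ∈ Q v, ∀ y ∈ Q v, dist x y ≤ δ)
    (σ : Fin K → V → V)
    (τ : Fin K → X → X) (Lτ : NNReal) (hτ : ∀ k, LipschitzWith Lτ (τ k))
    (ε : ℝ) (hε : ∀ (v : V) (k : Fin K), dist (τ k (ι v)) (ι (σ k v)) ≤ ε)
    (f : X → ℝ) (Lf : NNReal) (hf : LipschitzWith Lf f) :
    Real.sqrt (∫ x,
        ((1 / (K : ℝ)) * ∑ k : Fin K, (M : ℝ) * ∫ y in Q (σ k (idx x)), f y ∂ν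
          - (1 / (K : ℝ)) * ∑ k : Fin K, f (τ k x)) ^ 2 ∂ν)
      ≤ (Lf : ℝ) * ((1 + (Lτ : ℝ)) * δ + ε) :=
  stmt_4_general ν M K hK Q hQmeas hQmeasure ι hι idx hidx δ hδ σ τ Lτ hτ ε hε f Lf hf
end

section
/- Let 𝕋² = ℝ²/ℤ² with Haar probability measure ν, and let T₁, T₂ : 𝕋² → 𝕋² be the toral automorphisms induced by the matrices [[1,2],[0,1]] and [[1,0],[2,1]] in SL(2,ℤ). Define G on L²(𝕋², ν) by (Gf)(x) = (1/4)(f(T₁x) + f(T₁⁻¹x) + f(T₂x) + f(T₂⁻¹x)). Then for every f ∈ L²(𝕋², ν) with ∫ f dν = 0, ‖Gf‖_{L²} ≤ (√3/2)·‖f‖_{L²}; that is, the operator norm of G restricted to the zero-mean subspace L²₀(𝕋², ν) is at most √3/2. -/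
open MeasureTheory

instance : Fact ((0:ℝ) < 1) := ⟨one_pos⟩

instance : IsProbabilityMeasure (volume : Measure (AddCircle (1:ℝ))) :=
  ⟨by simp [AddCircle.measure_univ]⟩

/-- The flat two-dimensional torus `𝕋² = ℝ²/ℤ²`, realized as a product of two copies of
the additive circle `ℝ/ℤ`; its `volume` is the Haar probability measure. -/
abbrev Torus2 : Type := AddCircle (1:ℝ) × AddCircle (1:ℝ)

/-- The toral automorphism induced by the matrix `[[1,2],[0,1]] ∈ SL(2,ℤ)`. -/
noncomputable def torusT1 (p : Torus2) : Torus2 := (p.1 + (2:ℤ) • p.2, p.2)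

/-- The toral automorphism induced by the matrix `[[1,0],[2,1]] ∈ SL(2,ℤ)`. -/
noncomputable def torusT2 (p : Torus2) : Torus2 := (p.1, (2:ℤ) • p.1 + p.2)

/-- The toral automorphism induced by `[[1,2],[0,1]]⁻¹ = [[1,−2],[0,1]]`. -/
noncomputable def torusT1inv (p : Torus2) : Torus2 := (p.1 - (2:ℤ) • p.2, p.2)

/-- The toral automorphism induced by `[[1,0],[2,1]]⁻¹ = [[1,0],[−2,1]]`. -/
noncomputable def torusT2inv (p : Torus2) : Torus2 := (p.1, p.2 - (2:ℤ) • p.1)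

/-- The Margulis graphexon operator on the torus. -/
noncomputable def margulisG (f : Torus2 → ℝ) (x : Torus2) : ℝ :=
  (1 / 4) * (f (torusT1 x) + f (torusT1inv x) + f (torusT2 x) + f (torusT2inv x))

/-!
On the Fourier side, `G` becomes `b ↦ (1/4) ∑ⱼ b ∘ σⱼ` on `ℓ²(ℤ²)`, where the `σⱼ` are the
transposed shears `(k₁, k₂ ± 2k₁)`, `(k₁ ± 2k₂, k₂)`, and zero mean means `b 0 = 0`.
Orient every edge `k — m` of this 4-regular graph by the max-norm `h` and give it the weight
`w(k, m) = √3 ^ sign (h k - h m)`, so that `w(m, k) = w(k, m)⁻¹`. A weighted Cauchy–Schwarz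
inequality (Schur test) bounds `‖∑ⱼ b ∘ σⱼ‖²` by `C² ‖b‖²`, where `C` bounds the total weight
of the edges at each nonzero frequency. Every `k ≠ 0` has at least two more neighbours of
larger height than of smaller height, and this gives `C = 2√3`, hence `‖Gf‖ ≤ (2√3 / 4) ‖f‖`.
-/

open scoped ComplexConjugate

namespace Margulis

noncomputable def torusChar (k : ℤ × ℤ) (p : Torus2) : ℂ :=
  AddCircle.toCircle (k.1 • p.1 + k.2 • p.2)

noncomputable def torusCoeff (F : Torus2 → ℂ) (k : ℤ × ℤ) : ℂ :=
  ∫ p, conj (torusChar k p) * F p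

theorem continuous_torusChar (k : ℤ × ℤ) : Continuous (torusChar k) :=
  continuous_subtype_val.comp <| AddCircle.continuous_toCircle.comp <| by fun_prop

theorem torusChar_zero (p : Torus2) : torusChar 0 p = 1 := by
  simp [torusChar]

theorem integrable_conj_torusChar_mul {F : Torus2 → ℂ} (hF : Integrable F) (k : ℤ × ℤ) :
    Integrable fun p => conj (torusChar k p) * F p :=
  hF.bdd_mul (c := 1) (continuous_torusChar k).star.aestronglyMeasurable
    (ae_of_all _ fun p => by simp [torusChar, Circle.norm_coe])

theorem torusCoeff_sum {J : Type*} (s : Finset J) {F : J → Torus2 → ℂ}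
    (hF : ∀ j ∈ s, Integrable (F j)) (k : ℤ × ℤ) :
    torusCoeff (fun p => ∑ j ∈ s, F j p) k = ∑ j ∈ s, torusCoeff (F j) k := by
  simp only [torusCoeff, Finset.mul_sum]
  exact integral_finsetSum s fun j hj => integrable_conj_torusChar_mul (hF j hj) k

theorem torusCoeff_const_mul (c : ℂ) (F : Torus2 → ℂ) (k : ℤ × ℤ) :
    torusCoeff (fun p => c * F p) k = c * torusCoeff F k := by
  simp only [torusCoeff, mul_left_comm _ c]
  exact integral_const_mul c _

theorem torusCoeff_zero (F : Torus2 → ℂ) : torusCoeff F 0 = ∫ p, F p := by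
  simp [torusCoeff, torusChar_zero]

/-- Mathlib's Fourier theory on `UnitAddTorus` puts `haarAddCircle` on each factor; it agrees
with `volume` on `AddCircle 1`. -/
theorem measurePreserving_piFinTwo_haarAddCircle :
    MeasurePreserving (MeasurableEquiv.piFinTwo fun _ => AddCircle (1:ℝ))
      (Measure.pi fun _ => AddCircle.haarAddCircle) (volume : Measure Torus2) := by
  have h : (volume : Measure (AddCircle (1:ℝ))) = AddCircle.haarAddCircle := by
    rw [AddCircle.volume_eq_smul_haarAddCircle]; simp
  rw [Measure.volume_eq_prod, h]
  exact measurePreserving_piFinTwo _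

theorem hasSum_sq_norm_torusCoeff {F : Torus2 → ℂ} (hF : MemLp F 2) :
    HasSum (fun k => ‖torusCoeff F k‖ ^ 2) (∫ p, ‖F p‖ ^ 2) := by
  set e := MeasurableEquiv.piFinTwo fun _ : Fin 2 => AddCircle (1:ℝ)
  have he := measurePreserving_piFinTwo_haarAddCircle
  have hFe : MemLp (F ∘ e) 2 (Measure.pi fun _ => AddCircle.haarAddCircle) :=
    hF.comp_measurePreserving he
  have h := UnitAddTorus.hasSum_sq_mFourierCoeff (d := Fin 2) (hFe.toLp _)
  have hcoeff : ∀ n, UnitAddTorus.mFourierCoeff (hFe.toLp _) n = torusCoeff F (n 0, n 1) := by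
    intro n
    rw [UnitAddTorus.mFourierCoeff, torusCoeff, ← he.integral_comp']
    refine integral_congr_ae ?_
    filter_upwards [hFe.coeFn_toLp] with t ht
    rw [ht]
    simp [UnitAddTorus.mFourier, Fin.prod_univ_two, fourier_apply, torusChar, e,
      AddCircle.toCircle_add]
  have hnorm : ∫ t, ‖(hFe.toLp _ : _ → ℂ) t‖ ^ 2 ∂(Measure.pi fun _ => AddCircle.haarAddCircle)
      = ∫ p, ‖F p‖ ^ 2 := by
    rw [← he.integral_comp']
    exact integral_congr_ae (by filter_upwards [hFe.coeFn_toLp] with t ht; rw [ht]; rfl)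
  simp only [hcoeff] at h
  convert ((piFinTwoEquiv fun _ => ℤ).hasSum_iff (f := fun k => ‖torusCoeff F k‖ ^ 2)).mp h
    using 1
  exact hnorm.symm

theorem hasSum_sq_norm_torusCoeff_ofReal {f : Torus2 → ℝ} (hf : MemLp f 2) :
    HasSum (fun k => ‖torusCoeff (fun p => (f p : ℂ)) k‖ ^ 2) (∫ p, f p ^ 2) := by
  simpa [Complex.norm_real, sq_abs] using hasSum_sq_norm_torusCoeff hf.ofReal

theorem measurePreserving_prodMk_add_left {α G : Type*} [MeasurableSpace α] [MeasurableSpace G]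
    [AddGroup G] [MeasurableAdd₂ G] (μ : Measure α) (ν : Measure G) [SFinite μ] [SFinite ν]
    [ν.IsAddLeftInvariant] {g : α → G} (hg : Measurable g) :
    MeasurePreserving (fun p : α × G => (p.1, g p.1 + p.2)) (μ.prod ν) (μ.prod ν) :=
  (MeasurePreserving.id μ).skew_product ((hg.comp measurable_fst).add measurable_snd)
    (ae_of_all _ fun x => map_add_left_eq_self ν (g x))

theorem measurePreserving_torusT2 : MeasurePreserving torusT2 (volume : Measure Torus2) volume :=
  measurePreserving_prodMk_add_left volume volume (continuous_zsmul 2).measurable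

theorem measurePreserving_torusT1 : MeasurePreserving torusT1 (volume : Measure Torus2) volume := by
  have hswap : MeasurePreserving (Prod.swap : Torus2 → Torus2) volume volume :=
    Measure.measurePreserving_swap
  have h : torusT1 = Prod.swap ∘ torusT2 ∘ Prod.swap := by
    funext p; simp [torusT1, torusT2, add_comm]
  exact h ▸ hswap.comp (measurePreserving_torusT2.comp hswap)

noncomputable def torusT1Equiv : Torus2 ≃ᵐ Torus2 where
  toFun := torusT1
  invFun := torusT1inv
  left_inv p := by simp [torusT1, torusT1inv]
  right_inv p := by simp [torusT1, torusT1inv]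
  measurable_toFun := measurePreserving_torusT1.measurable
  measurable_invFun := show Measurable torusT1inv by unfold torusT1inv; fun_prop

noncomputable def torusT2Equiv : Torus2 ≃ᵐ Torus2 where
  toFun := torusT2
  invFun := torusT2inv
  left_inv p := by simp [torusT2, torusT2inv]
  right_inv p := by simp [torusT2, torusT2inv]
  measurable_toFun := measurePreserving_torusT2.measurable
  measurable_invFun := show Measurable torusT2inv by unfold torusT2inv; fun_prop

def torusT1Dual : Equiv.Perm (ℤ × ℤ) where
  toFun k := (k.1, k.2 + 2 * k.1)
  invFun k := (k.1, k.2 - 2 * k.1)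
  left_inv k := by simp
  right_inv k := by simp

def torusT2Dual : Equiv.Perm (ℤ × ℤ) where
  toFun k := (k.1 + 2 * k.2, k.2)
  invFun k := (k.1 - 2 * k.2, k.2)
  left_inv k := by simp
  right_inv k := by simp

theorem torusChar_torusT1 (k : ℤ × ℤ) (p : Torus2) :
    torusChar k (torusT1 p) = torusChar (torusT1Dual k) p := by
  simp only [torusChar, torusT1, torusT1Dual, Equiv.coe_fn_mk]
  congr 2
  module

theorem torusChar_torusT2 (k : ℤ × ℤ) (p : Torus2) :
    torusChar k (torusT2 p) = torusChar (torusT2Dual k) p := by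
  simp only [torusChar, torusT2, torusT2Dual, Equiv.coe_fn_mk]
  congr 2
  module

theorem torusCoeff_comp {e : Torus2 ≃ᵐ Torus2} (he : MeasurePreserving e volume volume)
    {τ : Equiv.Perm (ℤ × ℤ)} (hτ : ∀ k p, torusChar k (e p) = torusChar (τ k) p)
    (F : Torus2 → ℂ) (k : ℤ × ℤ) : torusCoeff (F ∘ e) k = torusCoeff F (τ⁻¹ k) := by
  have h := he.integral_comp' fun q => conj (torusChar (τ⁻¹ k) q) * F q
  simp only [hτ, Equiv.Perm.coe_inv, Equiv.apply_symm_apply] at h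
  exact h

theorem torusCoeff_comp_symm {e : Torus2 ≃ᵐ Torus2} (he : MeasurePreserving e volume volume)
    {τ : Equiv.Perm (ℤ × ℤ)} (hτ : ∀ k p, torusChar k (e p) = torusChar (τ k) p)
    (F : Torus2 → ℂ) (k : ℤ × ℤ) : torusCoeff (F ∘ e.symm) k = torusCoeff F (τ k) := by
  have h := he.integral_comp' fun q => conj (torusChar k q) * F (e.symm q)
  simp only [hτ, MeasurableEquiv.symm_apply_apply] at h
  exact h.symm

noncomputable def margulisMap : Fin 4 → Torus2 ≃ᵐ Torus2 :=
  ![torusT1Equiv, torusT1Equiv.symm, torusT2Equiv, torusT2Equiv.symm]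

def margulisFreq : Fin 4 → Equiv.Perm (ℤ × ℤ) :=
  ![torusT1Dual⁻¹, torusT1Dual, torusT2Dual⁻¹, torusT2Dual]

theorem measurePreserving_margulisMap (j : Fin 4) :
    MeasurePreserving (margulisMap j) (volume : Measure Torus2) volume := by
  fin_cases j
  exacts [measurePreserving_torusT1, measurePreserving_torusT1.symm torusT1Equiv,
    measurePreserving_torusT2, measurePreserving_torusT2.symm torusT2Equiv]

theorem torusCoeff_comp_margulisMap (F : Torus2 → ℂ) (j : Fin 4) (k : ℤ × ℤ) :
    torusCoeff (F ∘ margulisMap j) k = torusCoeff F (margulisFreq j k) := by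
  fin_cases j
  exacts [torusCoeff_comp measurePreserving_torusT1 torusChar_torusT1 F k,
    torusCoeff_comp_symm measurePreserving_torusT1 torusChar_torusT1 F k,
    torusCoeff_comp measurePreserving_torusT2 torusChar_torusT2 F k,
    torusCoeff_comp_symm measurePreserving_torusT2 torusChar_torusT2 F k]

theorem margulisG_eq (f : Torus2 → ℝ) (p : Torus2) :
    margulisG f p = 1 / 4 * ∑ j, f (margulisMap j p) := by
  rw [margulisG, Fin.sum_univ_four]
  rfl

theorem memLp_margulisG {f : Torus2 → ℝ} (hf : MemLp f 2) : MemLp (margulisG f) 2 := by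
  simp only [funext (margulisG_eq f)]
  exact (memLp_finsetSum _ fun j _ =>
    hf.comp_measurePreserving (measurePreserving_margulisMap j)).const_mul _

theorem torusCoeff_margulisG {f : Torus2 → ℝ} (hf : MemLp f 2) (k : ℤ × ℤ) :
    torusCoeff (fun p => (margulisG f p : ℂ)) k
      = 1 / 4 * ∑ j, torusCoeff (fun p => (f p : ℂ)) (margulisFreq j k) := by
  simp only [margulisG_eq, Complex.ofReal_mul, Complex.ofReal_sum]
  rw [torusCoeff_const_mul, torusCoeff_sum]
  · push_cast
    simp only [← torusCoeff_comp_margulisMap]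
    rfl
  · intro j _
    exact (hf.ofReal.comp_measurePreserving (measurePreserving_margulisMap j)).integrable
      one_le_two

theorem sq_norm_sum_le_sum_mul_sum_sq_norm_div {J E : Type*} [SeminormedAddCommGroup E]
    (s : Finset J) (u : J → E) {w : J → ℝ} (hw : ∀ j ∈ s, 0 < w j) :
    ‖∑ j ∈ s, u j‖ ^ 2 ≤ (∑ j ∈ s, w j) * ∑ j ∈ s, ‖u j‖ ^ 2 / w j := by
  rcases s.eq_empty_or_nonempty with rfl | hs
  · simp
  calc ‖∑ j ∈ s, u j‖ ^ 2 ≤ (∑ j ∈ s, ‖u j‖) ^ 2 := by gcongr; exact norm_sum_le _ _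
    _ ≤ _ := by
      rw [← div_le_iff₀' (Finset.sum_pos hw hs)]
      exact Finset.sq_sum_div_le_sum_sq_div s _ hw

section SchurTest

variable {ι J E : Type*} [Fintype J] [SeminormedAddCommGroup E] {w : ι → ι → ℝ} {b : ι → E}
  {C₁ C₂ : ℝ}

theorem summable_and_tsum_sum_sq_norm_comp_perm_div_le (σ : J → Equiv.Perm ι)
    (hw : ∀ k m, 0 < w k m) (hb : Summable fun k => ‖b k‖ ^ 2)
    (hcol : ∀ m, b m ≠ 0 → ∑ j, (w ((σ j)⁻¹ m) m)⁻¹ ≤ C₂) :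
    Summable (fun k => ∑ j, ‖b (σ j k)‖ ^ 2 / w k (σ j k)) ∧
      ∑' k, ∑ j, ‖b (σ j k)‖ ^ 2 / w k (σ j k) ≤ C₂ * ∑' k, ‖b k‖ ^ 2 := by
  set R : J → ι → ℝ := fun j k => ‖b (σ j k)‖ ^ 2 / w k (σ j k)
  have hR_nonneg : ∀ j k, 0 ≤ R j k := fun j k => div_nonneg (sq_nonneg _) (hw _ _).le
  have hcol' : ∀ m, ∑ j, R j ((σ j)⁻¹ m) ≤ C₂ * ‖b m‖ ^ 2 := by
    intro m
    simp only [R, Equiv.Perm.coe_inv, Equiv.apply_symm_apply, div_eq_inv_mul, ← Finset.sum_mul]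
    by_cases hm : b m = 0
    · simp [hm]
    · exact mul_le_mul_of_nonneg_right (hcol m hm) (sq_nonneg _)
  have hRσ : ∀ j, Summable fun m => R j ((σ j)⁻¹ m) := fun j =>
    Summable.of_nonneg_of_le (fun m => hR_nonneg _ _)
      (fun m => (Finset.single_le_sum (f := fun j => R j ((σ j)⁻¹ m))
        (fun j _ => hR_nonneg _ _) (Finset.mem_univ j)).trans (hcol' m)) (hb.mul_left C₂)
  have hR : ∀ j, Summable (R j) := fun j => ((σ j)⁻¹.summable_iff).mp (hRσ j)
  refine ⟨summable_sum fun j _ => hR j, ?_⟩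
  calc ∑' k, ∑ j, R j k = ∑ j, ∑' k, R j k := Summable.tsum_finsetSum fun j _ => hR j
    _ = ∑ j, ∑' m, R j ((σ j)⁻¹ m) := by simp only [Equiv.tsum_eq]
    _ = ∑' m, ∑ j, R j ((σ j)⁻¹ m) := (Summable.tsum_finsetSum fun j _ => hRσ j).symm
    _ ≤ ∑' m, C₂ * ‖b m‖ ^ 2 :=
      Summable.tsum_le_tsum hcol' (summable_sum fun j _ => hRσ j) (hb.mul_left C₂)
    _ = C₂ * ∑' m, ‖b m‖ ^ 2 := tsum_mul_left

theorem tsum_sq_norm_sum_comp_perm_le (σ : J → Equiv.Perm ι) (hw : ∀ k m, 0 < w k m)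
    (hb : Summable fun k => ‖b k‖ ^ 2) (hC₁ : 0 ≤ C₁)
    (hrow : ∀ k, (∃ j, b (σ j k) ≠ 0) → ∑ j, w k (σ j k) ≤ C₁)
    (hcol : ∀ m, b m ≠ 0 → ∑ j, (w ((σ j)⁻¹ m) m)⁻¹ ≤ C₂) :
    ∑' k, ‖∑ j, b (σ j k)‖ ^ 2 ≤ C₁ * C₂ * ∑' k, ‖b k‖ ^ 2 := by
  obtain ⟨hsum, hle⟩ := summable_and_tsum_sum_sq_norm_comp_perm_div_le σ hw hb hcol
  have hpoint : ∀ k, ‖∑ j, b (σ j k)‖ ^ 2 ≤ C₁ * ∑ j, ‖b (σ j k)‖ ^ 2 / w k (σ j k) := by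
    intro k
    by_cases hk : ∃ j, b (σ j k) ≠ 0
    · refine (sq_norm_sum_le_sum_mul_sum_sq_norm_div _ _ fun j _ => hw k (σ j k)).trans ?_
      gcongr
      · exact Finset.sum_nonneg fun j _ => div_nonneg (sq_nonneg _) (hw _ _).le
      · exact hrow k hk
    · push Not at hk
      simp [hk]
  calc ∑' k, ‖∑ j, b (σ j k)‖ ^ 2
      ≤ ∑' k, C₁ * ∑ j, ‖b (σ j k)‖ ^ 2 / w k (σ j k) :=
        Summable.tsum_le_tsum hpoint
          (Summable.of_nonneg_of_le (fun _ => sq_nonneg _) hpoint (hsum.mul_left C₁))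
          (hsum.mul_left C₁)
    _ = C₁ * ∑' k, ∑ j, ‖b (σ j k)‖ ^ 2 / w k (σ j k) := tsum_mul_left
    _ ≤ C₁ * (C₂ * ∑' k, ‖b k‖ ^ 2) := by gcongr
    _ = C₁ * C₂ * ∑' k, ‖b k‖ ^ 2 := (mul_assoc _ _ _).symm

end SchurTest

def height (k : ℤ × ℤ) : ℤ := max |k.1| |k.2|

noncomputable def weight (k m : ℤ × ℤ) : ℝ := √3 ^ (height k - height m).sign

theorem weight_pos (k m : ℤ × ℤ) : 0 < weight k m := zpow_pos (by positivity) _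

theorem weight_swap (k m : ℤ × ℤ) : weight m k = (weight k m)⁻¹ := by
  rw [weight, weight, ← zpow_neg, ← Int.sign_neg, neg_sub]

theorem int_sign_cases (d : ℤ) :
    (0 < d ∧ d.sign = 1) ∨ (d = 0 ∧ d.sign = 0) ∨ (d < 0 ∧ d.sign = -1) := by
  rcases lt_trichotomy d 0 with h | rfl | h
  · exact .inr <| .inr ⟨h, Int.sign_eq_neg_one_of_neg h⟩
  · simp
  · exact .inl ⟨h, Int.sign_eq_one_of_pos h⟩

/-- Affine in the sign, this turns the weight budget into a count of signs. -/
theorem sqrt_three_zpow_sign_le (d : ℤ) : √3 ^ d.sign ≤ (2 + d.sign) / √3 := by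
  have h0 : 0 < √3 := by positivity
  rw [le_div_iff₀ h0]
  rcases int_sign_cases d with ⟨-, hs⟩ | ⟨-, hs⟩ | ⟨-, hs⟩ <;>
    simp only [hs, zpow_one, zpow_zero, zpow_neg_one, Int.cast_one, Int.cast_zero, Int.cast_neg]
  · have h3 : √3 * √3 = 3 := Real.mul_self_sqrt (by norm_num)
    linarith
  · nlinarith [Real.sq_sqrt (show (0:ℝ) ≤ 3 by norm_num)]
  · rw [inv_mul_cancel₀ h0.ne']; norm_num

theorem sum_sign_height_sub_le {x y : ℤ} (hxy : (x, y) ≠ 0) :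
    (height (x, y) - height (x, y - 2 * x)).sign + (height (x, y) - height (x, y + 2 * x)).sign
      + (height (x, y) - height (x - 2 * y, y)).sign
      + (height (x, y) - height (x + 2 * y, y)).sign ≤ -2 := by
  -- One of `|c ± 2a|` is `|c| + 2|a|`, and both are at least `2|a| - |c|`.
  have pair : ∀ a c : ℤ,
      let P := (max |a| |c| - max |a| |c - 2 * a|).sign + (max |a| |c| - max |a| |c + 2 * a|).sign
      P ≤ 0 ∧ (|c| < |a| → P ≤ -2) ∧ (a ≠ 0 → |c| ≤ |a| → P ≤ -1) := by
    intro a c P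
    rcases int_sign_cases (max |a| |c| - max |a| |c - 2 * a|) with
      ⟨h1, e1⟩ | ⟨h1, e1⟩ | ⟨h1, e1⟩ <;>
    rcases int_sign_cases (max |a| |c| - max |a| |c + 2 * a|) with
      ⟨h2, e2⟩ | ⟨h2, e2⟩ | ⟨h2, e2⟩ <;>
    simp only [P, e1, e2] <;> simp only [abs_eq_max_neg] at * <;> omega
  have hx := pair x y
  have hy := pair y x
  simp only [height, max_comm |x| |y|, max_comm _ |y|] at hx hy ⊢
  rcases lt_trichotomy |x| |y| with h | h | h
  · have := hy.2.1 h
    omega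
  · have hx0 : x ≠ 0 := by rintro rfl; exact hxy (Prod.ext rfl (by simpa [eq_comm] using h))
    have hy0 : y ≠ 0 := by rintro rfl; exact hxy (Prod.ext (by simpa using h) rfl)
    have := hx.2.2 hx0 h.ge
    have := hy.2.2 hy0 h.le
    omega
  · have := hx.2.1 h
    omega

theorem margulisFreq_zero (j : Fin 4) : margulisFreq j 0 = 0 := by
  fin_cases j <;> simp [margulisFreq, torusT1Dual, torusT2Dual]

theorem sum_weight_margulisFreq_le {k : ℤ × ℤ} (hk : k ≠ 0) :
    ∑ j, weight k (margulisFreq j k) ≤ 2 * √3 := by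
  obtain ⟨x, y⟩ := k
  have h3 : √3 * √3 = 3 := Real.mul_self_sqrt (by norm_num)
  calc ∑ j, weight (x, y) (margulisFreq j (x, y))
      ≤ ∑ j, (2 + ((height (x, y) - height (margulisFreq j (x, y))).sign : ℝ)) / √3 :=
        Finset.sum_le_sum fun j _ => sqrt_three_zpow_sign_le _
    _ = (8 + (((height (x, y) - height (x, y - 2 * x)).sign
          + (height (x, y) - height (x, y + 2 * x)).sign
          + (height (x, y) - height (x - 2 * y, y)).sign
          + (height (x, y) - height (x + 2 * y, y)).sign : ℤ) : ℝ)) / √3 := by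
        simp only [Fin.sum_univ_four, margulisFreq, torusT1Dual, torusT2Dual, Matrix.cons_val,
          Equiv.Perm.coe_inv, Equiv.symm_mk, Equiv.coe_fn_mk, Int.cast_add]
        ring
    _ ≤ (8 + (-2 : ℤ)) / √3 := by gcongr; exact sum_sign_height_sub_le hk
    _ = 2 * √3 := by
        field_simp
        norm_num [h3]

theorem sum_inv_weight_margulisFreq_inv (m : ℤ × ℤ) :
    ∑ j, (weight ((margulisFreq j)⁻¹ m) m)⁻¹ = ∑ j, weight m (margulisFreq j m) := by
  simp only [← weight_swap, Fin.sum_univ_four, margulisFreq]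
  simp only [Matrix.cons_val, inv_inv]
  ring

end Margulis

/-- the Kesten spectral bound `√3/2` for the Margulis graphexon operator
on the zero-mean subspace `L²₀(𝕋², ν)`. -/
theorem stmt_9 (f : Torus2 → ℝ)
    (hf : MemLp f 2 (volume : Measure Torus2))
    (hmean : (∫ x : Torus2, f x) = 0) :
    Real.sqrt (∫ x : Torus2, (margulisG f x) ^ 2)
      ≤ (Real.sqrt 3 / 2) * Real.sqrt (∫ x : Torus2, (f x) ^ 2) := open Margulis in by
  set b := torusCoeff fun p => (f p : ℂ)
  have hb0 : b 0 = 0 := by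
    simp only [b, torusCoeff_zero]
    rw [integral_complex_ofReal, hmean, Complex.ofReal_zero]
  have hne {k : ℤ × ℤ} (hk : ∃ j, b (margulisFreq j k) ≠ 0) : k ≠ 0 := by
    rintro rfl
    simp [margulisFreq_zero, hb0] at hk
  have hF := hasSum_sq_norm_torusCoeff_ofReal hf
  have hG := hasSum_sq_norm_torusCoeff_ofReal (memLp_margulisG hf)
  have h12 : 2 * √3 * (2 * √3) = 12 := by
    rw [mul_mul_mul_comm, Real.mul_self_sqrt (by norm_num)]; norm_num
  have hschur := h12 ▸ tsum_sq_norm_sum_comp_perm_le margulisFreq weight_pos hF.summable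
    (by positivity) (fun k hk => sum_weight_margulisFreq_le (hne hk))
    (fun m hm => (sum_inv_weight_margulisFreq_inv m).trans_le
      (sum_weight_margulisFreq_le fun h => hm (h ▸ hb0)))
  have key : ∫ p, margulisG f p ^ 2 ≤ 3 / 4 * ∫ p, f p ^ 2 := by
    rw [← hG.tsum_eq, ← hF.tsum_eq]
    simp only [torusCoeff_margulisG hf, norm_mul, mul_pow, tsum_mul_left]
    norm_num
    linarith
  calc √(∫ p, margulisG f p ^ 2) ≤ √(3 / 4 * ∫ p, f p ^ 2) := Real.sqrt_le_sqrt key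
    _ = √3 / 2 * √(∫ p, f p ^ 2) := by
      rw [Real.sqrt_mul' _ (integral_nonneg fun p => sq_nonneg _), Real.sqrt_div' _ (by norm_num)]
      norm_num
end

section
/- Let λ ∈ ℝ and let ψ : ℕ → ℝ be a sequence satisfying the root condition ψ₁ = λ·ψ₀, the radial recurrence (1/4)(ψ_{d−1} + 3ψ_{d+1}) = λ·ψ_d for all d ≥ 1, and the weighted square-summability condition ∑_{d=0}^∞ 3^d·ψ_d² < ∞. Then ψ_d = 0 for all d ∈ ℕ. -/
open Filter Topology

/-- the normalized adjacency operator of the 4-regular infinite tree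
admits no nonzero weighted-square-summable radial eigenfunction for any real
eigenvalue. -/
theorem stmt_11 (lam : ℝ) (ψ : ℕ → ℝ)
    (hroot : ψ 1 = lam * ψ 0)
    (hrec : ∀ d : ℕ, 1 ≤ d → (1 / 4 : ℝ) * (ψ (d - 1) + 3 * ψ (d + 1)) = lam * ψ d)
    (hsum : Summable (fun d : ℕ => (3 : ℝ) ^ d * (ψ d) ^ 2)) :
    ∀ d : ℕ, ψ d = 0 := by
  have hrec' : ∀ d : ℕ, ψ d + 3 * ψ (d + 2) = 4 * lam * ψ (d + 1) := by
    intro d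
    have h := hrec (d + 1) (by omega)
    simp only [Nat.add_sub_cancel] at h
    linarith
  have hterm : Tendsto (fun d : ℕ => (3 : ℝ) ^ d * (ψ d) ^ 2) atTop (𝓝 0) :=
    hsum.tendsto_atTop_zero
  -- reduce to ψ 0 = 0
  have hzero : ψ 0 = 0 → ∀ d, ψ d = 0 := by
    intro h0
    have h1 : ψ 1 = 0 := by rw [hroot, h0, mul_zero]
    have key : ∀ d : ℕ, ψ d = 0 ∧ ψ (d + 1) = 0 := by
      intro d
      induction d with
      | zero => exact ⟨h0, h1⟩
      | succ n ih =>
        refine ⟨ih.2, ?_⟩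
        have h := hrec' n
        rw [ih.1, ih.2] at h
        linarith
    exact fun d => (key d).1
  -- the energy
  set E : ℕ → ℝ := fun d =>
    (3 : ℝ) ^ (d + 1) * (ψ (d + 1)) ^ 2 + (3 : ℝ) ^ d * (ψ d) ^ 2
      - 4 * lam * (3 : ℝ) ^ d * ψ d * ψ (d + 1) with hE
  have hconst : ∀ d : ℕ, E d = E 0 := by
    intro d
    induction d with
    | zero => rfl
    | succ n ih =>
      rw [← ih]
      have h := hrec' n
      simp only [hE]
      linear_combination ((3:ℝ) ^ n * (3 * ψ (n + 2) - ψ n)) * h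
  -- E tends to 0
  have hterm1 : Tendsto (fun d : ℕ => (3 : ℝ) ^ (d + 1) * (ψ (d + 1)) ^ 2) atTop (𝓝 0) :=
    hterm.comp (tendsto_add_atTop_nat 1)
  have hcross : Tendsto (fun d : ℕ => 4 * lam * (3 : ℝ) ^ d * ψ d * ψ (d + 1)) atTop (𝓝 0) := by
    have hg : Tendsto (fun d : ℕ =>
        2 * |lam| * ((3 : ℝ) ^ d * (ψ d) ^ 2 + (3 : ℝ) ^ (d + 1) * (ψ (d + 1)) ^ 2))
        atTop (𝓝 0) := by
      have : Tendsto (fun d : ℕ => (3 : ℝ) ^ d * (ψ d) ^ 2 + (3 : ℝ) ^ (d + 1) * (ψ (d + 1)) ^ 2)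
          atTop (𝓝 0) := by
        simpa using hterm.add hterm1
      simpa using this.const_mul (2 * |lam|)
    apply squeeze_zero_norm _ hg
    · intro d
      have h3 : (0:ℝ) < 3 ^ d := by positivity
      have habs : |ψ d * ψ (d + 1)| ≤ ((ψ d) ^ 2 + 3 * (ψ (d + 1)) ^ 2) / 2 := by
        rw [abs_le]
        constructor <;> nlinarith [sq_nonneg (ψ d + ψ (d+1)), sq_nonneg (ψ d - ψ (d+1)),
          sq_nonneg (ψ (d+1))]
      have : ‖4 * lam * (3 : ℝ) ^ d * ψ d * ψ (d + 1)‖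
          = 4 * |lam| * ((3:ℝ)^d * |ψ d * ψ (d + 1)|) := by
        rw [Real.norm_eq_abs]
        rw [show 4 * lam * (3 : ℝ) ^ d * ψ d * ψ (d + 1)
            = 4 * lam * ((3:ℝ)^d * (ψ d * ψ (d + 1))) by ring]
        rw [abs_mul, abs_mul, abs_mul]
        rw [abs_of_pos (by norm_num : (0:ℝ) < 4), abs_of_pos h3]
      rw [this, show ((3:ℝ)^(d+1)) = 3 * 3^d by ring]
      have h1 : (3:ℝ)^d * |ψ d * ψ (d + 1)| ≤ (3:ℝ)^d * (((ψ d) ^ 2 + 3 * (ψ (d + 1)) ^ 2) / 2) :=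
        mul_le_mul_of_nonneg_left habs (le_of_lt h3)
      have h4 : (0:ℝ) ≤ |lam| := abs_nonneg _
      nlinarith [mul_le_mul_of_nonneg_left h1 (by positivity : (0:ℝ) ≤ 4 * |lam|)]
  have hEtend : Tendsto E atTop (𝓝 0) := by
    have := (hterm1.add hterm).sub hcross
    simpa [hE] using this
  have hE0 : E 0 = 0 := by
    have : Tendsto E atTop (𝓝 (E 0)) := by
      have : E = fun _ => E 0 := funext hconst
      rw [this]; exact tendsto_const_nhds
    exact tendsto_nhds_unique this hEtend
  -- E 0 = ψ0² (1 − λ²)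
  have hkey : (ψ 0) ^ 2 * (1 - lam ^ 2) = 0 := by
    have : E 0 = (3 : ℝ) * (ψ 1) ^ 2 + (ψ 0) ^ 2 - 4 * lam * ψ 0 * ψ 1 := by
      simp [hE]
    rw [hroot] at this
    nlinarith [hE0]
  rcases mul_eq_zero.mp hkey with h | h
  · exact hzero (pow_eq_zero_iff (n := 2) (by norm_num) |>.mp h)
  · -- λ² = 1 : ψ d = λ^d ψ 0, then 3^d ψ0² → 0 forces ψ 0 = 0
    have hlam2 : lam ^ 2 = 1 := by linarith
    have hgeo : ∀ d : ℕ, ψ d = lam ^ d * ψ 0 ∧ ψ (d + 1) = lam ^ (d + 1) * ψ 0 := by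
      intro d
      induction d with
      | zero => exact ⟨by simp, by simpa using hroot⟩
      | succ n ih =>
        refine ⟨ih.2, ?_⟩
        have h := hrec' n
        rw [ih.1, ih.2] at h
        linear_combination (1/3 : ℝ) * h + (1/3 : ℝ) * lam ^ n * ψ 0 * hlam2
    have hψ0 : ψ 0 = 0 := by
      by_contra hne
      have hsq : ∀ d : ℕ, (3 : ℝ) ^ d * (ψ d) ^ 2 = (3 : ℝ) ^ d * (ψ 0) ^ 2 := by
        intro d
        rw [(hgeo d).1]
        have : (lam ^ d * ψ 0) ^ 2 = (lam ^ 2) ^ d * (ψ 0) ^ 2 := by ring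
        rw [this, hlam2, one_pow, one_mul]
      have hge : ∀ d : ℕ, (ψ 0) ^ 2 ≤ (3 : ℝ) ^ d * (ψ d) ^ 2 := by
        intro d
        rw [hsq d]
        have h1 : (1:ℝ) ≤ 3 ^ d := one_le_pow₀ (by norm_num)
        nlinarith [sq_nonneg (ψ 0)]
      have hpos : (0:ℝ) < (ψ 0) ^ 2 := by positivity
      have h := (hterm.eventually (eventually_lt_nhds hpos)).exists
      obtain ⟨d, hd⟩ := h
      exact absurd (hge d) (not_le.mpr hd)
    exact hzero hψ0
end

section
/- Assume c ≠ 0 and ρ > 0, and let λ* = −2(a_γc + kψ)/c². Then Δ(λ) ≥ 0 for all λ ∈ [−ρ, ρ] if and only if both of the following hold: (1) c²ρ² + 4a_γ² ≥ 4ρ·|a_γc + kψ|; and (2) if |λ*| ≤ ρ then kψ·(2a_γc + kψ) ≤ 0. (Equivalently, the parameterized scalar algebraic Riccati equation −k·p² + (2a_c − γ + λc)·p + λψ = 0 admits a real solution p for every λ ∈ [−ρ, ρ] exactly under these two algebraic conditions.) -/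
/-- exact algebraic conditions for the nonnegativity of the Riccati
discriminant `Δ(λ)` over the spectral interval `[−ρ, ρ]` (equivalently, real
solvability of the parameterized scalar algebraic Riccati equation). -/
theorem stmt_12 (a c q η γ k Pi ρ ac aγ ψ : ℝ)
    (hk : 0 < k) (hγ : 0 < γ) (hc : c ≠ 0) (hρ : 0 < ρ)
    (hac : ac = a - k * Pi) (haγ : aγ = ac - γ / 2) (hψ : ψ = c * Pi - q * η) :
    (∀ lam ∈ Set.Icc (-ρ) ρ,
        0 ≤ c ^ 2 * lam ^ 2 + 4 * (aγ * c + k * ψ) * lam + 4 * aγ ^ 2)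
      ↔ (4 * ρ * |aγ * c + k * ψ| ≤ c ^ 2 * ρ ^ 2 + 4 * aγ ^ 2 ∧
          (|(-2) * (aγ * c + k * ψ) / c ^ 2| ≤ ρ →
            k * ψ * (2 * aγ * c + k * ψ) ≤ 0)) := by
  have hc2 : 0 < c ^ 2 := by positivity
  set B := aγ * c + k * ψ with hB
  constructor
  · intro h
    constructor
    · rcases abs_cases B with ⟨he, _⟩ | ⟨he, _⟩ <;> rw [he]
      · have h1 := h (-ρ) ⟨le_refl _, by linarith⟩
        nlinarith
      · have h1 := h ρ ⟨by linarith, le_refl _⟩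
        nlinarith
    · intro hst
      rw [abs_le] at hst
      have key := h ((-2) * B / c ^ 2) ⟨hst.1, hst.2⟩
      have hd : ((-2) * B / c ^ 2) * c ^ 2 = (-2) * B :=
        div_mul_cancel₀ _ (ne_of_gt hc2)
      have e : c ^ 2 * ((-2) * B / c ^ 2) ^ 2 + 4 * B * ((-2) * B / c ^ 2) + 4 * aγ ^ 2
          = (4 * aγ ^ 2 * c ^ 2 - 4 * B ^ 2) / c ^ 2 := by
        field_simp; ring
      rw [e] at key
      have key2 : (0:ℝ) ≤ 4 * aγ ^ 2 * c ^ 2 - 4 * B ^ 2 := by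
        by_contra hcon
        push_neg at hcon
        have := div_neg_of_neg_of_pos hcon hc2
        linarith
      nlinarith
  · rintro ⟨h1, h2⟩ lam ⟨hl, hr⟩
    by_cases hv : |(-2) * B / c ^ 2| ≤ ρ
    · have hB2 := h2 hv
      have hB2' : B ^ 2 - aγ ^ 2 * c ^ 2 ≤ 0 := by rw [hB]; nlinarith
      nlinarith [sq_nonneg (c ^ 2 * lam + 2 * B), mul_pos hc2 hc2]
    · push_neg at hv
      have hv' : ρ * c ^ 2 < 2 * |B| := by
        rw [abs_div, abs_of_pos hc2, lt_div_iff₀ hc2] at hv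
        calc ρ * c ^ 2 < |(-2) * B| := hv
        _ = 2 * |B| := by rw [abs_mul]; norm_num
      rcases abs_cases B with ⟨he, _⟩ | ⟨he, _⟩ <;> rw [he] at h1 hv'
      · have inner : (0:ℝ) ≤ c ^ 2 * (lam - ρ) + 4 * B := by
          nlinarith [mul_nonneg hc2.le (show (0:ℝ) ≤ lam + ρ by linarith)]
        nlinarith [mul_nonneg (show (0:ℝ) ≤ lam + ρ by linarith) inner]
      · have inner : (0:ℝ) ≤ c ^ 2 * (-lam - ρ) - 4 * B := by
          nlinarith [mul_nonneg hc2.le (show (0:ℝ) ≤ ρ - lam by linarith)]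
        nlinarith [mul_nonneg (show (0:ℝ) ≤ ρ - lam by linarith) inner]
end

section
/- Let λ ∈ ℝ satisfy γ + λc ≥ 0 and Δ(λ) ≥ 0. Then γ + λc < √(Δ(λ)) if and only if L(λ) < 0, where L(λ) = ((γ − a)c + kqη)·λ − a_c(a_c − γ). Equivalently, the closed-loop generator A_cl(λ) = (γ + λc − √(Δ(λ)))/2 is negative if and only if L(λ) < 0. (In fact the algebraic identity (γ + λc)² − Δ(λ) = 4L(λ) holds for all λ ∈ ℝ.) -/
/-- the closed-loop generator `A_cl(λ) = (γ + λc − √Δ(λ))/2` is negative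
iff `L(λ) < 0`, via the algebraic identity `(γ + λc)² − Δ(λ) = 4·L(λ)`. -/
theorem stmt_14 (a c q η γ k Pi ac aγ ψ lam : ℝ)
    (hk : 0 < k) (hγ : 0 < γ)
    (hac : ac = a - k * Pi) (haγ : aγ = ac - γ / 2) (hψ : ψ = c * Pi - q * η)
    (hpos : 0 ≤ γ + lam * c)
    (hΔ : 0 ≤ c ^ 2 * lam ^ 2 + 4 * (aγ * c + k * ψ) * lam + 4 * aγ ^ 2) :
    (γ + lam * c <
        Real.sqrt (c ^ 2 * lam ^ 2 + 4 * (aγ * c + k * ψ) * lam + 4 * aγ ^ 2)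
      ↔ ((γ - a) * c + k * q * η) * lam - ac * (ac - γ) < 0) ∧
    (∀ μ : ℝ, (γ + μ * c) ^ 2
        - (c ^ 2 * μ ^ 2 + 4 * (aγ * c + k * ψ) * μ + 4 * aγ ^ 2)
      = 4 * (((γ - a) * c + k * q * η) * μ - ac * (ac - γ))) := by
  have hid : ∀ μ : ℝ, (γ + μ * c) ^ 2
        - (c ^ 2 * μ ^ 2 + 4 * (aγ * c + k * ψ) * μ + 4 * aγ ^ 2)
      = 4 * (((γ - a) * c + k * q * η) * μ - ac * (ac - γ)) := by
    intro μ; subst hac haγ hψ; ring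
  refine ⟨?_, hid⟩
  rw [show (γ + lam * c) = Real.sqrt ((γ + lam * c) ^ 2) by
    rw [Real.sqrt_sq hpos]]
  rw [Real.sqrt_lt_sqrt_iff (by positivity)]
  constructor
  · intro h; nlinarith [hid lam]
  · intro h; nlinarith [hid lam]
end

section
/- Assume c ≠ 0, γ > 0, ρ > 0, a_γ < 0, and Δ(λ) ≥ 0 for all λ ∈ Σ, where Σ = [−ρ, ρ] ∪ {1}. Define Ω = {λ ∈ Σ : γ + λc ≥ 0} and ℰ = {1, −ρ, ρ, −γ/c} ∩ Ω. Then the following are equivalent: (i) A_cl(λ) < 0 for all λ ∈ Σ (i.e., γ + λc < √(Δ(λ)) for every λ ∈ Σ); (ii) a_c < 0 and L(λ_e) < 0 for every λ_e ∈ ℰ. -/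
private lemma interp_neg (M B x e : ℝ) (hB : B < 0) (he : M * e + B < 0)
    (h1 : 0 ≤ x) (h2 : x ≤ e) : M * x + B < 0 := by
  rcases le_total M 0 with hM | hM
  · nlinarith
  · nlinarith

set_option maxHeartbeats 1000000 in
/-- algebraic characterization of global asymptotic stability of the
mean field system over the spectrum `Σ = [−ρ, ρ] ∪ {1}` of the graphexon operator:
the closed-loop generator is negative on all of `Σ` iff `a_c < 0` and `L < 0` at the
finitely many extreme points `ℰ = {1, −ρ, ρ, −γ/c} ∩ Ω`. -/
theorem stmt_15 (a c q η γ k Pi ρ ac aγ ψ : ℝ)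
    (hk : 0 < k) (hγ : 0 < γ) (hc : c ≠ 0) (hρ : 0 < ρ)
    (hac : ac = a - k * Pi) (haγ : aγ = ac - γ / 2) (hψ : ψ = c * Pi - q * η)
    (haγneg : aγ < 0)
    (Spec Ω E : Set ℝ) (Δ L : ℝ → ℝ)
    (hSpec : Spec = Set.Icc (-ρ) ρ ∪ {1})
    (hΔdef : ∀ lam, Δ lam = c ^ 2 * lam ^ 2 + 4 * (aγ * c + k * ψ) * lam + 4 * aγ ^ 2)
    (hLdef : ∀ lam, L lam = ((γ - a) * c + k * q * η) * lam - ac * (ac - γ))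
    (hΩ : Ω = {lam ∈ Spec | 0 ≤ γ + lam * c})
    (hE : E = ({1, -ρ, ρ, -γ / c} : Set ℝ) ∩ Ω)
    (hΔpos : ∀ lam ∈ Spec, 0 ≤ Δ lam) :
    (∀ lam ∈ Spec, γ + lam * c < Real.sqrt (Δ lam))
      ↔ (ac < 0 ∧ ∀ lam ∈ E, L lam < 0) := by
  -- key algebraic identity
  have key : ∀ lam, Δ lam + 4 * L lam = (γ + lam * c) ^ 2 := by
    intro lam
    rw [hΔdef, hLdef, hψ, haγ, hac]; ring
  have hacγ : ac - γ < 0 := by linarith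
  -- L as affine function
  set M := ((γ - a) * c + k * q * η) with hM
  have hL' : ∀ lam, L lam = M * lam + (-(ac * (ac - γ))) := by
    intro lam; rw [hLdef]; ring
  -- (i) at a point of Ω iff L < 0 there
  have equiv_pt : ∀ lam, 0 ≤ γ + lam * c →
      ((γ + lam * c < Real.sqrt (Δ lam)) ↔ L lam < 0) := by
    intro lam hpos
    constructor
    · intro h
      have h2 : (γ + lam * c) ^ 2 < Δ lam := by
        have := (Real.lt_sqrt hpos).mp h
        linarith
      have := key lam
      linarith
    · intro h
      have h2 : (γ + lam * c) ^ 2 < Δ lam := by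
        have := key lam; linarith
      exact (Real.lt_sqrt hpos).mpr h2
  have h0Spec : (0 : ℝ) ∈ Spec := by
    rw [hSpec]; left; exact ⟨by linarith, by linarith⟩
  constructor
  · rintro h
    have hacneg : ac < 0 := by
      have h0 : γ + 0 * c < Real.sqrt (Δ 0) := h 0 h0Spec
      have hL0 : L 0 < 0 := (equiv_pt 0 (by linarith)).mp h0
      rw [hLdef] at hL0
      nlinarith
    refine ⟨hacneg, ?_⟩
    intro lam hlam
    rw [hE] at hlam
    obtain ⟨-, hΩm⟩ := hlam
    rw [hΩ] at hΩm
    obtain ⟨hSp, hpos⟩ := hΩm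
    exact (equiv_pt lam hpos).mp (h lam hSp)
  · rintro ⟨hacneg, hEneg⟩ lam hlam
    by_cases hpos : 0 ≤ γ + lam * c
    · -- lam ∈ Ω; show L lam < 0
      have hlamΩ : lam ∈ Ω := by rw [hΩ]; exact ⟨hlam, hpos⟩
      have hB : -(ac * (ac - γ)) < 0 := by nlinarith
      have hLE : ∀ e, e ∈ ({1, -ρ, ρ, -γ / c} : Set ℝ) → e ∈ Spec →
          0 ≤ γ + e * c → L e < 0 := by
        intro e he heS hep
        apply hEneg
        rw [hE]
        exact ⟨he, by rw [hΩ]; exact ⟨heS, hep⟩⟩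
      have hgoal : L lam < 0 := by
        rw [hSpec] at hlam
        rcases hlam with hIcc | h1
        · obtain ⟨hlo, hhi⟩ := hIcc
          rcases le_total 0 lam with hl0 | hl0
          · -- 0 ≤ lam ≤ ρ
            by_cases hρc : 0 ≤ γ + ρ * c
            · have hρS : ρ ∈ Spec := by
                rw [hSpec]; left; exact ⟨by linarith, le_refl _⟩
              have hLe : L ρ < 0 := hLE ρ (by simp) hρS hρc
              rw [hL'] at hLe ⊢
              exact interp_neg M _ lam ρ hB hLe hl0 hhi
            · push_neg at hρc
              have hcneg : c < 0 := by nlinarith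
              set e := -γ / c with hedef
              have hec : e * c = -γ := by rw [hedef]; field_simp
              have he0 : 0 < e := by
                rcases lt_trichotomy e 0 with h | h | h
                · nlinarith
                · exfalso; rw [h] at hec; simp at hec; linarith
                · exact h
              have heρ : e < ρ := by nlinarith
              have hlame : lam ≤ e := by nlinarith
              have heS : e ∈ Spec := by
                rw [hSpec]; left; exact ⟨by linarith, le_of_lt heρ⟩
              have hLe : L e < 0 := hLE e (Set.mem_insert_iff.mpr (Or.inr (Set.mem_insert_iff.mpr (Or.inr (Set.mem_insert_iff.mpr (Or.inr (Set.mem_singleton _))))))) heS (by nlinarith)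
              rw [hL'] at hLe ⊢
              exact interp_neg M _ lam e hB hLe hl0 hlame
          · -- -ρ ≤ lam ≤ 0
            by_cases hρc : 0 ≤ γ + (-ρ) * c
            · have hρS : (-ρ) ∈ Spec := by
                rw [hSpec]; left; exact ⟨le_refl _, by linarith⟩
              have hLe : L (-ρ) < 0 := hLE (-ρ) (by simp) hρS hρc
              rw [hL'] at hLe ⊢
              have := interp_neg (-M) _ (-lam) (-(-ρ)) hB
                (by rw [show -M * -(-ρ) = M * (-ρ) by ring]; exact hLe)
                (by linarith) (by linarith)
              nlinarith [this]
            · push_neg at hρc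
              have hcpos : 0 < c := by nlinarith
              set e := -γ / c with hedef
              have hec : e * c = -γ := by rw [hedef]; field_simp
              have he0 : e < 0 := by nlinarith
              have heρ : -ρ < e := by nlinarith
              have hlame : e ≤ lam := by nlinarith
              have heS : e ∈ Spec := by
                rw [hSpec]; left; exact ⟨le_of_lt heρ, by linarith⟩
              have hLe : L e < 0 := hLE e (Set.mem_insert_iff.mpr (Or.inr (Set.mem_insert_iff.mpr (Or.inr (Set.mem_insert_iff.mpr (Or.inr (Set.mem_singleton _))))))) heS (by nlinarith)
              rw [hL'] at hLe ⊢
              have := interp_neg (-M) _ (-lam) (-e) hB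
                (by rw [show -M * -e = M * e by ring]; exact hLe)
                (by linarith) (by linarith)
              nlinarith [this]
        · rw [Set.mem_singleton_iff] at h1
          subst h1
          exact hLE 1 (by left; rfl) (by rw [hSpec]; right; rfl) hpos
      exact (equiv_pt lam hpos).mpr hgoal
    · push_neg at hpos
      calc γ + lam * c < 0 := hpos
        _ ≤ Real.sqrt (Δ lam) := Real.sqrt_nonneg _
end

section
/- Assume ρ > 0 and Δ(λ) ≥ 0 for all λ ∈ [−ρ, ρ]. Then the closed-loop generator A_cl(λ) = (γ + λc − √(Δ(λ)))/2 attains its maximum over [−ρ, ρ] at an endpoint: for every λ ∈ [−ρ, ρ], A_cl(λ) ≤ max(A_cl(−ρ), A_cl(ρ)). Consequently, sup_{λ ∈ [−ρ,ρ]} A_cl(λ) > 0 if and only if max(A_cl(ρ), A_cl(−ρ)) > 0. -/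
private lemma stmt16_le_of_sq (a b : ℝ) (ha : 0 ≤ a) (hb : 0 ≤ b) (h : a ^ 2 ≤ b ^ 2) :
    a ≤ b := by nlinarith

set_option maxHeartbeats 2000000 in
lemma stmt16_key (c B C ρ lam : ℝ) (hρ : 0 < ρ)
    (hmem : lam ∈ Set.Icc (-ρ) ρ)
    (hpos : ∀ x ∈ Set.Icc (-ρ) ρ, 0 ≤ c ^ 2 * x ^ 2 + B * x + C) :
    c * lam - Real.sqrt (c ^ 2 * lam ^ 2 + B * lam + C) ≤
      max (c * (-ρ) - Real.sqrt (c ^ 2 * (-ρ) ^ 2 + B * (-ρ) + C))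
          (c * ρ - Real.sqrt (c ^ 2 * ρ ^ 2 + B * ρ + C)) := by
  obtain ⟨hl1, hl2⟩ := hmem
  have hmρ : (-ρ) ∈ Set.Icc (-ρ) ρ := ⟨le_refl _, by linarith⟩
  have hpρ : ρ ∈ Set.Icc (-ρ) ρ := ⟨by linarith, le_refl _⟩
  have hQl : 0 ≤ c ^ 2 * lam ^ 2 + B * lam + C := hpos lam ⟨hl1, hl2⟩
  have hQm : 0 ≤ c ^ 2 * (-ρ) ^ 2 + B * (-ρ) + C := hpos _ hmρ
  have hQp : 0 ≤ c ^ 2 * ρ ^ 2 + B * ρ + C := hpos _ hpρ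
  obtain ⟨s, hs0, hs2, hsdef⟩ : ∃ s, 0 ≤ s ∧ s ^ 2 = c ^ 2 * lam ^ 2 + B * lam + C ∧
      Real.sqrt (c ^ 2 * lam ^ 2 + B * lam + C) = s :=
    ⟨_, Real.sqrt_nonneg _, Real.sq_sqrt hQl, rfl⟩
  obtain ⟨sm, hsm0, hsm2, hsmdef⟩ : ∃ sm, 0 ≤ sm ∧ sm ^ 2 = c ^ 2 * (-ρ) ^ 2 + B * (-ρ) + C ∧
      Real.sqrt (c ^ 2 * (-ρ) ^ 2 + B * (-ρ) + C) = sm :=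
    ⟨_, Real.sqrt_nonneg _, Real.sq_sqrt hQm, rfl⟩
  obtain ⟨sp, hsp0, hsp2, hspdef⟩ : ∃ sp, 0 ≤ sp ∧ sp ^ 2 = c ^ 2 * ρ ^ 2 + B * ρ + C ∧
      Real.sqrt (c ^ 2 * ρ ^ 2 + B * ρ + C) = sp :=
    ⟨_, Real.sqrt_nonneg _, Real.sq_sqrt hQp, rfl⟩
  rw [hsdef, hsmdef, hspdef]
  rcases eq_or_ne c 0 with hc | hc
  · -- c = 0 : Δ is linear
    subst hc
    rcases le_total 0 B with hB | hB
    · apply le_max_of_le_left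
      have hle : sm ≤ s := stmt16_le_of_sq _ _ hsm0 hs0 (by nlinarith)
      linarith
    · apply le_max_of_le_right
      have hle : sp ≤ s := stmt16_le_of_sq _ _ hsp0 hs0 (by nlinarith)
      linarith
  · have hc2 : 0 < c ^ 2 := by positivity
    rcases le_or_gt (B ^ 2) (4 * c ^ 2 * C) with hD | hD
    · -- nonpositive discriminant: λc − √Δ is monotone
      have habs : (2 * c ^ 2 * lam + B) ^ 2 ≤ 4 * c ^ 2 * s ^ 2 := by nlinarith [hs2]
      rcases hc.lt_or_gt with hcneg | hcpos
      · -- c < 0: maximum at −ρ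
        apply le_max_of_le_left
        have hX : 0 ≤ -(2 * c) * s := mul_nonneg (by linarith) hs0
        have hbr : 2 * c * s ≤ 2 * c ^ 2 * lam + B := by nlinarith [habs, hX]
        have key : sm ≤ s - c * (lam + ρ) := by
          refine stmt16_le_of_sq _ _ hsm0 ?_ ?_
          · nlinarith [mul_nonneg (show (0:ℝ) ≤ lam + ρ by linarith)
              (show (0:ℝ) ≤ -c by linarith)]
          · nlinarith [hs2, hsm2, mul_nonneg (show (0:ℝ) ≤ ρ + lam by linarith)
              (show (0:ℝ) ≤ 2 * c ^ 2 * lam + B - 2 * c * s by linarith)]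
        linarith
      · -- c > 0: maximum at ρ
        apply le_max_of_le_right
        have hX : 0 ≤ (2 * c) * s := mul_nonneg (by linarith) hs0
        have hbr : 2 * c ^ 2 * lam + B ≤ 2 * c * s := by nlinarith [habs, hX]
        have key : sp ≤ s + c * (ρ - lam) := by
          refine stmt16_le_of_sq _ _ hsp0 ?_ ?_
          · nlinarith [mul_nonneg (show (0:ℝ) ≤ ρ - lam by linarith)
              (show (0:ℝ) ≤ c by linarith)]
          · nlinarith [hs2, hsp2, mul_nonneg (show (0:ℝ) ≤ ρ - lam by linarith)
              (show (0:ℝ) ≤ 2 * c * s - (2 * c ^ 2 * lam + B) by linarith)]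
        linarith
    · -- positive discriminant: √Δ is concave on the interval
      obtain ⟨t, ht0, ht1, hlam⟩ : ∃ t, 0 ≤ t ∧ t ≤ 1 ∧ lam = ρ - 2 * t * ρ := by
        refine ⟨(ρ - lam) / (2 * ρ), div_nonneg (by linarith) (by positivity), ?_, ?_⟩
        · rw [div_le_one (by positivity)]; linarith
        · field_simp; ring
      subst hlam
      have ht1' : (0:ℝ) ≤ 1 - t := by linarith
      -- the vertex of Δ lies outside the open interval
      have hB2 : 4 * c ^ 4 * ρ ^ 2 ≤ B ^ 2 := by
        by_contra h
        push_neg at h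
        have hmem' : -B / (2 * c ^ 2) ∈ Set.Icc (-ρ) ρ := by
          constructor
          · rw [le_div_iff₀ (by positivity)]; nlinarith [mul_pos hc2 hρ]
          · rw [div_le_iff₀ (by positivity)]; nlinarith [mul_pos hc2 hρ]
        have hq := hpos _ hmem'
        have heq : c ^ 2 * (-B / (2 * c ^ 2)) ^ 2 + B * (-B / (2 * c ^ 2)) + C
            = C - B ^ 2 / (4 * c ^ 2) := by field_simp; ring
        rw [heq, sub_nonneg, div_le_iff₀ (by positivity)] at hq
        nlinarith [hq]
      have hDm : B ^ 2 - 4 * c ^ 2 * C ≤ (B - 2 * c ^ 2 * ρ) ^ 2 := by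
        nlinarith [mul_nonneg hc2.le hQm]
      have hDp : B ^ 2 - 4 * c ^ 2 * C ≤ (B + 2 * c ^ 2 * ρ) ^ 2 := by
        nlinarith [mul_nonneg hc2.le hQp]
      have hDD : (B ^ 2 - 4 * c ^ 2 * C) * (B ^ 2 - 4 * c ^ 2 * C)
          ≤ (B - 2 * c ^ 2 * ρ) ^ 2 * (B + 2 * c ^ 2 * ρ) ^ 2 :=
        mul_le_mul hDm hDp (by linarith) (sq_nonneg _)
      have hvv : B ^ 2 - 4 * c ^ 2 * C ≤ (B - 2 * c ^ 2 * ρ) * (B + 2 * c ^ 2 * ρ) := by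
        nlinarith [hDD, hB2, hD]
      have hE0 : c ^ 2 * ρ ^ 2 ≤ C := by nlinarith [hvv, hc2]
      have hE : sm * sp ≤ C - c ^ 2 * ρ ^ 2 := by
        refine stmt16_le_of_sq _ _ (mul_nonneg hsm0 hsp0) (by linarith) ?_
        have e : (sm * sp) ^ 2 = sm ^ 2 * sp ^ 2 := by ring
        rw [e, hsm2, hsp2]
        nlinarith [mul_nonneg (sq_nonneg ρ) (show (0:ℝ) ≤ B ^ 2 - 4 * c ^ 2 * C by linarith)]
      have hprod : 0 ≤ 2 * t * (1 - t) * ((C - c ^ 2 * ρ ^ 2) - sm * sp) := by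
        have := mul_nonneg (mul_nonneg ht0 ht1') (show (0:ℝ) ≤ (C - c ^ 2 * ρ ^ 2) - sm * sp by
          linarith)
        linarith
      have hcomb : t * sm + (1 - t) * sp ≤ s := by
        have hnn : 0 ≤ t * sm + (1 - t) * sp := by
          have h1 := mul_nonneg ht0 hsm0
          have h2 := mul_nonneg ht1' hsp0
          linarith
        refine stmt16_le_of_sq _ _ hnn hs0 ?_
        have e1 : (t * sm + (1 - t) * sp) ^ 2
            = t ^ 2 * sm ^ 2 + (1 - t) ^ 2 * sp ^ 2 + 2 * t * (1 - t) * (sm * sp) := by ring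
        rw [e1, hsm2, hsp2, hs2]
        linarith [hprod]
      have hml := le_max_left (c * (-ρ) - sm) (c * ρ - sp)
      have hmr := le_max_right (c * (-ρ) - sm) (c * ρ - sp)
      have h1 : 0 ≤ t * (max (c * (-ρ) - sm) (c * ρ - sp) - (c * (-ρ) - sm)) :=
        mul_nonneg ht0 (by linarith)
      have h2 : 0 ≤ (1 - t) * (max (c * (-ρ) - sm) (c * ρ - sp) - (c * ρ - sp)) :=
        mul_nonneg ht1' (by linarith)
      linarith [hcomb, h1, h2]


/-- the closed-loop generator `A_cl` attains its maximum over the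
continuous spectrum `[−ρ, ρ]` at an endpoint; consequently the Turing-type spatial
instability condition `sup_{λ∈[−ρ,ρ]} A_cl(λ) > 0` is equivalent to
`max(A_cl(ρ), A_cl(−ρ)) > 0`. -/
theorem stmt_16 (a c q η γ k Pi ρ ac aγ ψ : ℝ)
    (hk : 0 < k) (hγ : 0 < γ) (hρ : 0 < ρ)
    (hac : ac = a - k * Pi) (haγ : aγ = ac - γ / 2) (hψ : ψ = c * Pi - q * η)
    (Δ Acl : ℝ → ℝ)
    (hΔdef : ∀ lam, Δ lam = c ^ 2 * lam ^ 2 + 4 * (aγ * c + k * ψ) * lam + 4 * aγ ^ 2)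
    (hAcl : ∀ lam, Acl lam = (γ + lam * c - Real.sqrt (Δ lam)) / 2)
    (hΔpos : ∀ lam ∈ Set.Icc (-ρ) ρ, 0 ≤ Δ lam) :
    (∀ lam ∈ Set.Icc (-ρ) ρ, Acl lam ≤ max (Acl (-ρ)) (Acl ρ)) ∧
    (0 < sSup (Acl '' Set.Icc (-ρ) ρ) ↔ 0 < max (Acl ρ) (Acl (-ρ))) := by
  have hpos : ∀ x ∈ Set.Icc (-ρ) ρ,
      0 ≤ c ^ 2 * x ^ 2 + (4 * (aγ * c + k * ψ)) * x + 4 * aγ ^ 2 := by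
    intro x hx
    have h := hΔpos x hx
    rw [hΔdef x] at h
    linarith
  have part1 : ∀ lam ∈ Set.Icc (-ρ) ρ, Acl lam ≤ max (Acl (-ρ)) (Acl ρ) := by
    intro lam hmem
    have hkey := stmt16_key c (4 * (aγ * c + k * ψ)) (4 * aγ ^ 2) ρ lam hρ hmem hpos
    rw [hAcl lam, hAcl (-ρ), hAcl ρ, hΔdef lam, hΔdef (-ρ), hΔdef ρ]
    rcases max_cases (c * (-ρ) - Real.sqrt (c ^ 2 * (-ρ) ^ 2 + 4 * (aγ * c + k * ψ) * (-ρ)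
        + 4 * aγ ^ 2))
      (c * ρ - Real.sqrt (c ^ 2 * ρ ^ 2 + 4 * (aγ * c + k * ψ) * ρ + 4 * aγ ^ 2)) with
      ⟨heq, _⟩ | ⟨heq, _⟩ <;> rw [heq] at hkey
    · apply le_max_of_le_left
      have e1 : c ^ 2 * lam ^ 2 + (4 * (aγ * c + k * ψ)) * lam + 4 * aγ ^ 2
          = c ^ 2 * lam ^ 2 + 4 * (aγ * c + k * ψ) * lam + 4 * aγ ^ 2 := by ring
      rw [e1] at hkey
      have e2 : c ^ 2 * (-ρ) ^ 2 + (4 * (aγ * c + k * ψ)) * (-ρ) + 4 * aγ ^ 2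
          = c ^ 2 * (-ρ) ^ 2 + 4 * (aγ * c + k * ψ) * (-ρ) + 4 * aγ ^ 2 := by ring
      rw [e2] at hkey
      have hcl : lam * c = c * lam := by ring
      have hcm : (-ρ) * c = c * (-ρ) := by ring
      linarith [hkey]
    · apply le_max_of_le_right
      have e1 : c ^ 2 * lam ^ 2 + (4 * (aγ * c + k * ψ)) * lam + 4 * aγ ^ 2
          = c ^ 2 * lam ^ 2 + 4 * (aγ * c + k * ψ) * lam + 4 * aγ ^ 2 := by ring
      rw [e1] at hkey
      linarith [hkey]
  refine ⟨part1, ?_⟩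
  have hmemρ : ρ ∈ Set.Icc (-ρ) ρ := ⟨by linarith, le_refl _⟩
  have hmemm : (-ρ) ∈ Set.Icc (-ρ) ρ := ⟨le_refl _, by linarith⟩
  have hne : (Acl '' Set.Icc (-ρ) ρ).Nonempty := ⟨Acl ρ, ⟨ρ, hmemρ, rfl⟩⟩
  have hbdd : BddAbove (Acl '' Set.Icc (-ρ) ρ) := by
    refine ⟨max (Acl (-ρ)) (Acl ρ), ?_⟩
    rintro x ⟨y, hy, rfl⟩
    exact part1 y hy
  have hub : sSup (Acl '' Set.Icc (-ρ) ρ) ≤ max (Acl (-ρ)) (Acl ρ) := by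
    refine csSup_le hne ?_
    rintro x ⟨y, hy, rfl⟩
    exact part1 y hy
  have hlbp : Acl ρ ≤ sSup (Acl '' Set.Icc (-ρ) ρ) := le_csSup hbdd ⟨ρ, hmemρ, rfl⟩
  have hlbm : Acl (-ρ) ≤ sSup (Acl '' Set.Icc (-ρ) ρ) := le_csSup hbdd ⟨-ρ, hmemm, rfl⟩
  constructor
  · intro h
    rw [max_comm]
    exact lt_of_lt_of_le h hub
  · intro h
    rcases lt_max_iff.mp h with h' | h'
    · exact lt_of_lt_of_le h' hlbp
    · exact lt_of_lt_of_le h' hlbm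
end

section
/- Assume γ > a and a_c < 0, and define the thresholds c⁺ = (Θ/ρ − kqη)/(γ − a) and c⁻ = (−Θ/ρ − kqη)/(γ − a). Then the instability set satisfies I₀ = (−∞, min(γ/ρ, c⁻)) ∪ (max(−γ/ρ, c⁺), ∞). -/
/-- exact characterization of the Turing instability set `I₀` of coupling
parameters in the case `γ > a` (with stable uncoupled dynamics `a_c < 0`). -/
theorem stmt_17 (a q η γ k Pi ρ ac aγ Θ : ℝ)
    (hk : 0 < k) (hγ : 0 < γ) (hρ : 0 < ρ)
    (hac : ac = a - k * Pi) (haγ : aγ = ac - γ / 2) (hΘ : Θ = ac * (ac - γ))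
    (hga : a < γ) (hacneg : ac < 0)
    (Δ : ℝ → ℝ → ℝ) (I₀ : Set ℝ) (cplus cminus : ℝ)
    (hΔdef : ∀ c lam, Δ c lam
      = c ^ 2 * lam ^ 2 + 4 * (aγ * c + k * (c * Pi - q * η)) * lam + 4 * aγ ^ 2)
    (hI₀ : I₀ = {c : ℝ |
      (0 < γ + ρ * c ∧ Δ c ρ < (γ + ρ * c) ^ 2) ∨
      (0 < γ - ρ * c ∧ Δ c (-ρ) < (γ - ρ * c) ^ 2)})
    (hcplus : cplus = (Θ / ρ - k * q * η) / (γ - a))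
    (hcminus : cminus = (-(Θ / ρ) - k * q * η) / (γ - a)) :
    I₀ = Set.Iio (min (γ / ρ) cminus) ∪ Set.Ioi (max (-(γ / ρ)) cplus) := by
  have hga' : (0:ℝ) < γ - a := by linarith
  ext c
  have hP : Δ c ρ < (γ + ρ * c) ^ 2 ↔ cplus < c := by
    rw [hcplus, div_lt_iff₀ hga', sub_lt_iff_lt_add, div_lt_iff₀ hρ, hΔdef, hΘ, haγ, hac]
    constructor <;> intro h <;> nlinarith
  have hM : Δ c (-ρ) < (γ - ρ * c) ^ 2 ↔ c < cminus := by
    have hne : -(Θ / ρ) = (-Θ) / ρ := by ring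
    rw [hcminus, lt_div_iff₀ hga', hne, lt_sub_iff_add_lt, lt_div_iff₀ hρ, hΔdef, hΘ, haγ, hac]
    constructor <;> intro h <;> nlinarith
  have h1 : 0 < γ + ρ * c ↔ -(γ / ρ) < c := by
    have : -(γ / ρ) = (-γ) / ρ := by ring
    rw [this, div_lt_iff₀ hρ]
    constructor <;> intro h <;> nlinarith
  have h2 : 0 < γ - ρ * c ↔ c < γ / ρ := by
    rw [lt_div_iff₀ hρ]
    constructor <;> intro h <;> nlinarith
  simp only [hI₀, Set.mem_setOf_eq, Set.mem_union, Set.mem_Iio, Set.mem_Ioi,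
    lt_min_iff, max_lt_iff, hP, hM, h1, h2]
  tauto
end

section
/- Assume γ < a and a_c < 0, and define the thresholds c⁺ = (Θ/ρ − kqη)/(γ − a) and c⁻ = (−Θ/ρ − kqη)/(γ − a). Then c⁺ < c⁻ and the instability set satisfies I₀ = (−γ/ρ, c⁺) ∪ (c⁻, γ/ρ). -/
set_option maxHeartbeats 1000000


/-- exact characterization of the Turing instability set `I₀` of coupling
parameters in the case `γ < a` (with stable uncoupled dynamics `a_c < 0`): two disjoint
bounded intervals. -/
theorem stmt_18 (a q η γ k Pi ρ ac aγ Θ : ℝ)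
    (hk : 0 < k) (hγ : 0 < γ) (hρ : 0 < ρ)
    (hac : ac = a - k * Pi) (haγ : aγ = ac - γ / 2) (hΘ : Θ = ac * (ac - γ))
    (hga : γ < a) (hacneg : ac < 0)
    (Δ : ℝ → ℝ → ℝ) (I₀ : Set ℝ) (cplus cminus : ℝ)
    (hΔdef : ∀ c lam, Δ c lam
      = c ^ 2 * lam ^ 2 + 4 * (aγ * c + k * (c * Pi - q * η)) * lam + 4 * aγ ^ 2)
    (hI₀ : I₀ = {c : ℝ |
      (0 < γ + ρ * c ∧ Δ c ρ < (γ + ρ * c) ^ 2) ∨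
      (0 < γ - ρ * c ∧ Δ c (-ρ) < (γ - ρ * c) ^ 2)})
    (hcplus : cplus = (Θ / ρ - k * q * η) / (γ - a))
    (hcminus : cminus = (-(Θ / ρ) - k * q * η) / (γ - a)) :
    cplus < cminus ∧
      I₀ = Set.Ioo (-(γ / ρ)) cplus ∪ Set.Ioo cminus (γ / ρ) := by
  have hga' : γ - a < 0 := by linarith
  have hρ' : ρ ≠ 0 := ne_of_gt hρ
  have hganz : γ - a ≠ 0 := ne_of_lt hga'
  have hΘpos : 0 < Θ := by rw [hΘ]; exact mul_pos_of_neg_of_neg hacneg (by linarith)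
  have t3 : γ / ρ * ρ = γ := div_mul_cancel₀ _ hρ'
  have t1 : ρ * (cplus * (γ - a)) = Θ - ρ * (k * q * η) := by
    rw [hcplus]; field_simp
  have t4 : ρ * (cminus * (γ - a)) = -Θ - ρ * (k * q * η) := by
    rw [hcminus]; field_simp
  have hρga : ρ * (γ - a) < 0 := mul_neg_of_pos_of_neg hρ hga'
  constructor
  · -- cplus < cminus
    nlinarith [t1, t4, hΘpos, hρga]
  · rw [hI₀]; ext c
    simp only [Set.mem_setOf_eq, Set.mem_union, Set.mem_Ioo, hΔdef]
    subst hac haγ hΘ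
    have hb1 : ∀ x : ℝ, (0 < γ + ρ * x) ↔ -(γ / ρ) < x := by
      intro x
      constructor
      · intro h; nlinarith [t3]
      · intro h; nlinarith [t3, mul_pos hρ (by linarith : (0:ℝ) < x + γ / ρ)]
    have hb2 : ∀ x : ℝ, (0 < γ - ρ * x) ↔ x < γ / ρ := by
      intro x
      constructor
      · intro h; nlinarith [t3]
      · intro h; nlinarith [t3, mul_pos hρ (by linarith : (0:ℝ) < γ / ρ - x)]
    have hq1 : ∀ x : ℝ,
        (x ^ 2 * ρ ^ 2 + 4 * ((a - k * Pi - γ / 2) * x + k * (x * Pi - q * η)) * ρ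
          + 4 * (a - k * Pi - γ / 2) ^ 2 < (γ + ρ * x) ^ 2) ↔ x < cplus := by
      intro x
      constructor
      · intro h
        have key : ρ * (cplus * (γ - a)) < ρ * (γ - a) * x := by linarith [t1, h]
        nlinarith [key, hρga]
      · intro h
        have key : ρ * (γ - a) * cplus < ρ * (γ - a) * x :=
          mul_lt_mul_of_neg_left h hρga
        nlinarith [key, t1]
    have hq2 : ∀ x : ℝ,
        (x ^ 2 * (-ρ) ^ 2 + 4 * ((a - k * Pi - γ / 2) * x + k * (x * Pi - q * η)) * (-ρ)
          + 4 * (a - k * Pi - γ / 2) ^ 2 < (γ - ρ * x) ^ 2) ↔ cminus < x := by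
      intro x
      constructor
      · intro h
        have key : ρ * (γ - a) * x < ρ * (cminus * (γ - a)) := by linarith [t4, h]
        nlinarith [key, hρga]
      · intro h
        have key : ρ * (γ - a) * x < ρ * (γ - a) * cminus :=
          mul_lt_mul_of_neg_left h hρga
        nlinarith [key, t4]
    rw [hb1, hb2, hq1, hq2]
    tauto
end
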